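/- arXiv:2203.13748 — 5 statements merged into one kernel-verified Lean document; each statement's English description precedes it below -/
import Mathlib

section
/- Let d ≥ 1 be an integer, let H be a Hermitian d × d complex matrix, let μ ∈ ℝ, and let u₀ ∈ ℂ^d. Then the ordinary differential equation i u'(t) − H u(t) = μ² (u(t) ⊙ conj(u(t)) ⊙ u(t)), i.e. componentwise i u_j'(t) − (H u(t))_j = μ² |u_j(t)|² u_j(t), with initial condition u(0) = u₀, has a unique global solution u ∈ C¹(ℝ; ℂ^d); moreover the mass is conserved: ∑_{j=1}^{d} |u_j(t)|² = ∑_{j=1}^{d} |u_j(0)|² for all t ∈ ℝ. -/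
/-!
The cubic term is a real diagonal potential: `i u' = (H + μ² diag |u_j|²) u`. For any Hermitian
matrix `A(t)`, solutions of `u' = -i A(t) u` conserve the mass `∑ |u_j|²`. Truncating the
potential to `μ² diag (min |u_j| R)²`, with `R²` the mass of `u₀`, gives a globally Lipschitz
field with the same conservation law, so Picard–Lindelöf with a uniform time step yields a global
solution. Its mass stays `R²`, so every `|u_j| ≤ R`, the truncation is inactive and `u` solves the
original equation. Conversely, any solution of the original equation has mass `R²`, so it also
solves the truncated equation, where solutions are unique.
-/

open Set Metric NNReal Matrix Complex

/-- `v` solves the ODE `i v'(t) - H v(t) = μ² (v ⊙ conj v ⊙ v)(t)` componentwise on all of `ℝ`. -/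
def IsNLSSol (d : ℕ) (H : Matrix (Fin d) (Fin d) ℂ) (μ : ℝ) (v : ℝ → Fin d → ℂ) : Prop :=
  ∀ t : ℝ, ∀ j : Fin d, ∃ w : ℂ,
    HasDerivAt (fun s => v s j) w t ∧
      Complex.I * w - H.mulVec (v t) j = (μ : ℂ) ^ 2 * ((starRingEnd ℂ) (v t j) * v t j) * v t j

section LipschitzODE

variable {E : Type*} [NormedAddCommGroup E] [NormedSpace ℝ E] {F : E → E} {K : ℝ≥0}

theorem LipschitzWith.exists_hasDerivAt_Ioo [CompleteSpace E] (hF : LipschitzWith K F)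
    {ε : ℝ≥0} (hε : K * ε ≤ 1 / 2) (t₀ : ℝ) (x₀ : E) :
    ∃ γ : ℝ → E, γ t₀ = x₀ ∧ ∀ t ∈ Ioo (t₀ - ε) (t₀ + ε), HasDerivAt γ (F (γ t)) t := by
  have ht₀ : t₀ ∈ Icc (t₀ - ε) (t₀ + ε) := ⟨by simp, by simp⟩
  -- on the ball of radius `2 ‖F x₀‖ ε` the field is bounded by `2 ‖F x₀‖`
  have hpl : IsPicardLindelof (fun _ ↦ F) (⟨t₀, ht₀⟩ : Icc (t₀ - ε) (t₀ + ε)) x₀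
      (2 * ‖F x₀‖₊ * ε) 0 (2 * ‖F x₀‖₊) K := by
    refine .of_time_independent (fun x hx ↦ ?_) hF.lipschitzOnWith ?_
    · have hdist : ‖F x - F x₀‖ ≤ K * (2 * ‖F x₀‖ * ε) := by
        rw [← dist_eq_norm]
        exact (hF.dist_le_mul x x₀).trans (by gcongr; simpa using hx)
      have hε' : (K : ℝ) * ε ≤ 1 / 2 := by exact_mod_cast hε
      push_cast
      calc ‖F x‖ ≤ ‖F x₀‖ + ‖F x - F x₀‖ := norm_le_insert' _ _
        _ ≤ ‖F x₀‖ + ‖F x₀‖ * (2 * (K * ε)) := by linarith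
        _ ≤ 2 * ‖F x₀‖ := by nlinarith [norm_nonneg (F x₀)]
    · simp
  obtain ⟨γ, hγ₀, hγ⟩ := hpl.exists_eq_forall_mem_Icc_hasDerivWithinAt₀
  exact ⟨γ, hγ₀, fun t ht ↦ (hγ t (Ioo_subset_Icc_self ht)).hasDerivAt (Icc_mem_nhds ht.1 ht.2)⟩

theorem LipschitzWith.eqOn_Ioo_inter_Ioo (hF : LipschitzWith K F) {a b a' b' t₀ : ℝ}
    {γ γ' : ℝ → E} (hγ : ∀ t ∈ Ioo a b, HasDerivAt γ (F (γ t)) t)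
    (hγ' : ∀ t ∈ Ioo a' b', HasDerivAt γ' (F (γ' t)) t)
    (ht₀ : t₀ ∈ Ioo a b ∩ Ioo a' b') (h : γ t₀ = γ' t₀) :
    EqOn γ γ' (Ioo a b ∩ Ioo a' b') := by
  rw [Ioo_inter_Ioo] at ht₀ ⊢
  exact ODE_solution_unique_of_mem_Ioo (v := fun _ ↦ F) (s := fun _ ↦ univ)
    (fun _ _ ↦ hF.lipschitzOnWith) ht₀
    (fun t ht ↦ ⟨hγ t ⟨ht.1.trans_le' (le_max_left _ _), ht.2.trans_le (min_le_left _ _)⟩,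
      trivial⟩)
    (fun t ht ↦ ⟨hγ' t ⟨ht.1.trans_le' (le_max_right _ _), ht.2.trans_le (min_le_right _ _)⟩,
      trivial⟩) h

theorem forall_hasDerivAt_congr_of_eqOn {U : Set ℝ} (hU : IsOpen U) {γ γ' : ℝ → E}
    (hγ : ∀ t ∈ U, HasDerivAt γ (F (γ t)) t) (h : EqOn γ' γ U) :
    ∀ t ∈ U, HasDerivAt γ' (F (γ' t)) t := fun t ht ↦ by
  rw [h ht]
  exact (hγ t ht).congr_of_eventuallyEq (h.eventuallyEq_of_mem (hU.mem_nhds ht))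

theorem LipschitzWith.exists_hasDerivAt_union_Ioo (hF : LipschitzWith K F)
    {a b a' b' t₀ : ℝ} {γ γ' : ℝ → E} (hγ : ∀ t ∈ Ioo a b, HasDerivAt γ (F (γ t)) t)
    (hγ' : ∀ t ∈ Ioo a' b', HasDerivAt γ' (F (γ' t)) t)
    (ht₀ : t₀ ∈ Ioo a b ∩ Ioo a' b') (h : γ t₀ = γ' t₀) :
    ∃ γ'' : ℝ → E, EqOn γ'' γ (Ioo a b) ∧
      ∀ t ∈ Ioo a b ∪ Ioo a' b', HasDerivAt γ'' (F (γ'' t)) t := by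
  classical
  refine ⟨(Ioo a b).piecewise γ γ', piecewise_eqOn _ _ _, ?_⟩
  have heq' : EqOn ((Ioo a b).piecewise γ γ') γ' (Ioo a' b') := fun t ht ↦ by
    by_cases hab : t ∈ Ioo a b
    · rw [piecewise_eq_of_mem _ _ _ hab]
      exact hF.eqOn_Ioo_inter_Ioo hγ hγ' ht₀ h ⟨hab, ht⟩
    · rw [piecewise_eq_of_notMem _ _ _ hab]
  rintro t (ht | ht)
  · exact forall_hasDerivAt_congr_of_eqOn isOpen_Ioo hγ (piecewise_eqOn _ _ _) t ht
  · exact forall_hasDerivAt_congr_of_eqOn isOpen_Ioo hγ' heq' t ht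

theorem LipschitzWith.exists_hasDerivAt_Ioo_neg_add [CompleteSpace E] (hF : LipschitzWith K F)
    {ε : ℝ≥0} (hε₀ : 0 < ε) (hε : K * ε ≤ 1 / 2) {r : ℝ} (hr : ε ≤ r) {γ : ℝ → E}
    (hγ : ∀ t ∈ Ioo (-r) r, HasDerivAt γ (F (γ t)) t) :
    ∃ γ' : ℝ → E, γ' 0 = γ 0 ∧
      ∀ t ∈ Ioo (-(r + ε / 2)) (r + ε / 2), HasDerivAt γ' (F (γ' t)) t := by
  replace hε₀ : (0 : ℝ) < ε := hε₀
  -- glue local solutions centred at `±c` to both ends of `γ`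
  set c := r - ε / 2 with hc
  obtain ⟨γr, hγr₀, hγr⟩ := hF.exists_hasDerivAt_Ioo hε c (γ c)
  obtain ⟨γl, hγl₀, hγl⟩ := hF.exists_hasDerivAt_Ioo hε (-c) (γ (-c))
  obtain ⟨γ₁, hγ₁γ, hγ₁⟩ := hF.exists_hasDerivAt_union_Ioo hγ hγr (t₀ := c)
    ⟨⟨by linarith, by linarith⟩, ⟨by linarith, by linarith⟩⟩ hγr₀.symm
  obtain ⟨γ₂, hγ₂γ₁, hγ₂⟩ := hF.exists_hasDerivAt_union_Ioo (a := -r) (b := c + ε)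
    (fun t ht ↦ hγ₁ t (Ioo_subset_Ioo_union_Ioo le_rfl (by linarith) le_rfl ht))
    hγl (t₀ := -c) ⟨⟨by linarith, by linarith⟩, ⟨by linarith, by linarith⟩⟩
    (by rw [hγl₀, hγ₁γ ⟨by linarith, by linarith⟩])
  refine ⟨γ₂, ?_, fun t ht ↦ hγ₂ t ?_⟩
  · rw [hγ₂γ₁ ⟨by linarith, by linarith⟩, hγ₁γ ⟨by linarith, by linarith⟩]
  · rw [union_comm]
    exact Ioo_subset_Ioo_union_Ioo (by linarith) (by linarith) (by linarith) ht

theorem LipschitzWith.exists_hasDerivAt_Ioo_neg [CompleteSpace E] (hF : LipschitzWith K F)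
    (x₀ : E) (a : ℝ) : ∃ γ : ℝ → E, γ 0 = x₀ ∧ ∀ t ∈ Ioo (-a) a, HasDerivAt γ (F (γ t)) t := by
  set ε : ℝ≥0 := (2 * (K + 1))⁻¹
  have hε : K * ε ≤ 1 / 2 := by
    rw [← div_eq_mul_inv, div_le_iff₀ (by positivity)]
    linear_combination (le_add_of_nonneg_right zero_le_one : K ≤ K + 1)
  have hε₀ : 0 < ε := by positivity
  have hsol : ∀ n : ℕ, ∃ γ : ℝ → E, γ 0 = x₀ ∧
      ∀ t ∈ Ioo (-(ε + n * (ε / 2) : ℝ)) (ε + n * (ε / 2)), HasDerivAt γ (F (γ t)) t := by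
    intro n
    induction n with
    | zero => simpa using hF.exists_hasDerivAt_Ioo hε 0 x₀
    | succ n ih =>
      obtain ⟨γ, hγ₀, hγ⟩ := ih
      obtain ⟨γ', hγ'₀, hγ'⟩ :=
        hF.exists_hasDerivAt_Ioo_neg_add hε₀ hε (by nlinarith [n.cast_nonneg (α := ℝ)]) hγ
      refine ⟨γ', hγ'₀.trans hγ₀, fun t ht ↦ hγ' t ?_⟩
      convert ht using 2 <;> push_cast <;> ring
  obtain ⟨n, hn⟩ := exists_nat_ge (a / (ε / 2))
  rw [div_le_iff₀ (by positivity)] at hn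
  obtain ⟨γ, hγ₀, hγ⟩ := hsol n
  exact ⟨γ, hγ₀, fun t ht ↦ hγ t (Ioo_subset_Ioo (by linarith) (by linarith) ht)⟩

theorem LipschitzWith.exists_hasDerivAt [CompleteSpace E] (hF : LipschitzWith K F) (x₀ : E) :
    ∃ γ : ℝ → E, γ 0 = x₀ ∧ ∀ t, HasDerivAt γ (F (γ t)) t := by
  choose γ hγ₀ hγ using hF.exists_hasDerivAt_Ioo_neg x₀
  have hmem : ∀ s t : ℝ, |s| ≤ |t| → s ∈ Ioo (-(|t| + 1)) (|t| + 1) := fun s t hst ↦ by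
    rw [mem_Ioo, ← abs_lt]; linarith
  refine ⟨fun t ↦ γ (|t| + 1) t, hγ₀ _, fun t ↦ ?_⟩
  refine forall_hasDerivAt_congr_of_eqOn isOpen_Ioo (hγ (|t| + 1)) (fun s hs ↦ ?_) t
    (hmem t t le_rfl)
  exact hF.eqOn_Ioo_inter_Ioo (hγ (|s| + 1)) (hγ (|t| + 1)) (t₀ := 0)
    ⟨hmem 0 s (by simp), hmem 0 t (by simp)⟩ (by rw [hγ₀, hγ₀]) ⟨hmem s s le_rfl, hs⟩

theorem LipschitzWith.eq_of_hasDerivAt (hF : LipschitzWith K F) {γ γ' : ℝ → E} {t₀ : ℝ}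
    (hγ : ∀ t, HasDerivAt γ (F (γ t)) t) (hγ' : ∀ t, HasDerivAt γ' (F (γ' t)) t)
    (h : γ t₀ = γ' t₀) : γ = γ' :=
  ODE_solution_unique_univ (v := fun _ ↦ F) (s := fun _ ↦ univ) (fun _ ↦ hF.lipschitzOnWith)
    (fun t ↦ ⟨hγ t, trivial⟩) (fun t ↦ ⟨hγ' t, trivial⟩) h

end LipschitzODE

theorem sum_normSq_eq_of_hasDerivAt_neg_I_smul_mulVec {n : Type*} [Fintype n]
    {A : ℝ → Matrix n n ℂ} (hA : ∀ t, (A t).IsHermitian) {u : ℝ → n → ℂ}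
    (hu : ∀ t, HasDerivAt u (-I • (A t *ᵥ u t)) t) (t : ℝ) :
    ∑ j, normSq (u t j) = ∑ j, normSq (u 0 j) := by
  have hderiv : ∀ s, HasDerivAt (fun s ↦ ∑ j, ‖u s j‖ ^ 2) 0 s := fun s ↦ by
    refine (HasDerivAt.fun_sum fun j _ ↦ (hasDerivAt_pi.mp (hu s) j).norm_sq).congr_deriv ?_
    -- the derivative is `2 Re ⟨u, -i A u⟩ = 2 Im ⟨u, A u⟩`, which vanishes as `A` is Hermitian
    have hreal := (hA s).im_star_dotProduct_mulVec_self (u s)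
    simp only [Complex.inner, ← Finset.mul_sum, ← Complex.re_sum]
    have hsum : ∑ i, (-I • (A s *ᵥ u s)) i * starRingEnd ℂ (u s i)
        = -I * (star (u s) ⬝ᵥ A s *ᵥ u s) := by
      simp only [dotProduct, Finset.mul_sum, Pi.smul_apply, smul_eq_mul, Pi.star_apply,
        RCLike.star_def]
      exact Finset.sum_congr rfl fun i _ ↦ by ring
    rw [hsum]
    simpa using hreal
  simp_rw [← Complex.sq_norm]
  exact is_const_of_deriv_eq_zero (fun s ↦ (hderiv s).differentiableAt)
    (fun s ↦ (hderiv s).deriv) t 0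

theorem LipschitzWith.piMap {ι : Type*} [Fintype ι] {α β : ι → Type*}
    [∀ i, PseudoEMetricSpace (α i)] [∀ i, PseudoEMetricSpace (β i)] {K : ℝ≥0}
    {f : ∀ i, α i → β i} (hf : ∀ i, LipschitzWith K (f i)) : LipschitzWith K (Pi.map f) :=
  fun x y ↦ edist_pi_le_iff.2 fun i ↦ (hf i (x i) (y i)).trans <| by
    gcongr; exact edist_le_pi_edist x y i

theorem lipschitzWith_min_norm_sq_smul (R : ℝ≥0) :
    LipschitzWith (3 * R ^ 2) fun z : ℂ ↦ ((min ‖z‖ R ^ 2 : ℝ) : ℂ) * z := by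
  refine .of_dist_le_mul fun z w ↦ ?_
  wlog hwz : ‖w‖ ≤ ‖z‖ generalizing z w
  · rw [dist_comm, dist_comm z]; exact this w z (le_of_not_ge hwz)
  rw [dist_eq_norm, dist_eq_norm]
  push_cast
  rcases le_total ‖w‖ R with hw | hw
  · set a := min ‖z‖ (R : ℝ)
    have ha₀ : 0 ≤ a := le_min (norm_nonneg z) R.2
    have haR : a ≤ R := min_le_right _ _
    have hab : |a - ‖w‖| ≤ ‖z - w‖ := by
      rw [← min_eq_left hw, ← Real.dist_eq, ← dist_eq_norm]
      simpa using (lipschitzWith_one_norm.min_const (R : ℝ)).dist_le_mul z w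
    have hsplit : (a : ℂ) ^ 2 * z - (‖w‖ : ℂ) ^ 2 * w
        = (a : ℂ) ^ 2 * (z - w) + (((a - ‖w‖) * (a + ‖w‖) : ℝ) : ℂ) * w := by push_cast; ring
    rw [min_eq_left hw, hsplit]
    calc ‖(a : ℂ) ^ 2 * (z - w) + (((a - ‖w‖) * (a + ‖w‖) : ℝ) : ℂ) * w‖
        ≤ a ^ 2 * ‖z - w‖ + |a - ‖w‖| * (a + ‖w‖) * ‖w‖ := by
          refine (norm_add_le _ _).trans_eq ?_
          rw [norm_mul, norm_mul, norm_pow, norm_real, norm_real, Real.norm_eq_abs,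
            Real.norm_eq_abs, abs_of_nonneg ha₀, abs_mul,
            abs_of_nonneg (by positivity : 0 ≤ a + ‖w‖)]
      _ ≤ 3 * R ^ 2 * ‖z - w‖ := by
          have : |a - ‖w‖| * (a + ‖w‖) * ‖w‖ ≤ ‖z - w‖ * (2 * R) * R := by gcongr; linarith
          have : a ^ 2 * ‖z - w‖ ≤ R ^ 2 * ‖z - w‖ := by gcongr
          linarith
  · rw [min_eq_right hw, min_eq_right (hw.trans hwz), ← mul_sub, norm_mul]
    simp only [norm_pow, norm_real, Real.norm_eq_abs, NNReal.abs_eq]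
    nlinarith [norm_nonneg (z - w), sq_nonneg (R : ℝ)]

theorem norm_le_of_sum_normSq_le {n : Type*} [Fintype n] {x : n → ℂ} {R : ℝ≥0}
    (h : ∑ k, normSq (x k) ≤ R ^ 2) (j : n) : ‖x j‖ ≤ R := by
  refine (pow_le_pow_iff_left₀ (norm_nonneg _) R.2 two_ne_zero).1 ?_
  rw [Complex.sq_norm]
  exact (Finset.single_le_sum (fun k _ ↦ normSq_nonneg (x k)) (Finset.mem_univ j)).trans h

section NLSField

variable {n : Type*} [Fintype n] [DecidableEq n]

def nlsField (H : Matrix n n ℂ) (μ : ℝ) (ρ : ℂ → ℝ) (x : n → ℂ) : n → ℂ :=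
  -I • ((H + diagonal fun j ↦ ((μ ^ 2 * ρ (x j) : ℝ) : ℂ)) *ᵥ x)

theorem nlsField_apply (H : Matrix n n ℂ) (μ : ℝ) (ρ : ℂ → ℝ) (x : n → ℂ) (j : n) :
    nlsField H μ ρ x j = -I * ((H *ᵥ x) j + ((μ ^ 2 * ρ (x j) : ℝ) : ℂ) * x j) := by
  simp [nlsField, add_mulVec, mulVec_diagonal]

theorem sum_normSq_eq_of_hasDerivAt_nlsField {H : Matrix n n ℂ} (hH : H.IsHermitian) {μ : ℝ}
    {ρ : ℂ → ℝ} {u : ℝ → n → ℂ} (hu : ∀ t, HasDerivAt u (nlsField H μ ρ (u t)) t) (t : ℝ) :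
    ∑ j, normSq (u t j) = ∑ j, normSq (u 0 j) :=
  sum_normSq_eq_of_hasDerivAt_neg_I_smul_mulVec
    (fun s ↦ hH.add (isHermitian_diagonal_of_self_adjoint _ (by ext; simp))) hu t

theorem lipschitzWith_nlsField_min_norm_sq (H : Matrix n n ℂ) (μ : ℝ) (R : ℝ≥0) :
    ∃ K, LipschitzWith K (nlsField H μ fun z ↦ min ‖z‖ R ^ 2) := by
  have hF := (lipschitzWith_smul (-I)).comp
    ((LinearMap.toContinuousLinearMap (mulVecLin H)).lipschitz.add (LipschitzWith.piMap
      fun (_ : n) ↦ (lipschitzWith_smul ((μ : ℂ) ^ 2)).comp (lipschitzWith_min_norm_sq_smul R)))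
  have hfield : (nlsField H μ fun z ↦ min ‖z‖ R ^ 2) = fun x ↦
      -I • (H *ᵥ x + fun j ↦ (μ : ℂ) ^ 2 • (((min ‖x j‖ R ^ 2 : ℝ) : ℂ) * x j)) := by
    ext x j
    simp only [nlsField_apply, Pi.smul_apply, Pi.add_apply, smul_eq_mul]
    push_cast
    ring
  rw [hfield]
  exact ⟨_, hF⟩

theorem nlsField_min_norm_sq_eq {H : Matrix n n ℂ} {μ : ℝ} {R : ℝ≥0} {x : n → ℂ}
    (hx : ∀ j, ‖x j‖ ≤ R) : nlsField H μ (fun z ↦ min ‖z‖ R ^ 2) x = nlsField H μ normSq x := by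
  simp only [nlsField, min_eq_left (hx _), Complex.sq_norm]

end NLSField

theorem isNLSSol_iff {d : ℕ} {H : Matrix (Fin d) (Fin d) ℂ} {μ : ℝ} {v : ℝ → Fin d → ℂ} :
    IsNLSSol d H μ v ↔ ∀ t, HasDerivAt v (nlsField H μ normSq (v t)) t := by
  simp only [IsNLSSol, hasDerivAt_pi, nlsField_apply]
  refine forall_congr' fun t ↦ forall_congr' fun j ↦ ⟨fun ⟨w, hw, heq⟩ ↦ ?_, fun h ↦ ⟨_, h, ?_⟩⟩
  · refine hw.congr_deriv ?_
    push_cast [normSq_eq_conj_mul_self]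
    linear_combination (-I) * heq + w * I_mul_I
  · push_cast [normSq_eq_conj_mul_self]
    ring_nf
    rw [I_sq]
    ring

theorem stmt5_general (d : ℕ) (H : Matrix (Fin d) (Fin d) ℂ) (hH : H.IsHermitian)
    (μ : ℝ) (u₀ : Fin d → ℂ) :
    ∃ u : ℝ → Fin d → ℂ,
      IsNLSSol d H μ u ∧ u 0 = u₀ ∧
        (∀ v : ℝ → Fin d → ℂ, IsNLSSol d H μ v → v 0 = u₀ → v = u) ∧
        ∀ t : ℝ, ∑ j, Complex.normSq (u t j) = ∑ j, Complex.normSq (u₀ j) := by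
  set R : ℝ≥0 := NNReal.sqrt (∑ j, normSq (u₀ j)).toNNReal
  have hR : ∀ x : Fin d → ℂ, ∑ j, normSq (x j) = ∑ j, normSq (u₀ j) → ∀ j, ‖x j‖ ≤ R :=
    fun x hx ↦ norm_le_of_sum_normSq_le <| by
      rw [hx, ← NNReal.coe_pow, NNReal.sq_sqrt,
        Real.coe_toNNReal _ (Finset.sum_nonneg fun j _ ↦ normSq_nonneg _)]
  obtain ⟨K, hK⟩ := lipschitzWith_nlsField_min_norm_sq H μ R
  obtain ⟨u, hu₀, hu⟩ := hK.exists_hasDerivAt u₀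
  have hmass t : ∑ j, normSq (u t j) = ∑ j, normSq (u₀ j) :=
    hu₀ ▸ sum_normSq_eq_of_hasDerivAt_nlsField hH hu t
  refine ⟨u, isNLSSol_iff.2 fun t ↦ ?_, hu₀, fun v hv hv₀ ↦ ?_, hmass⟩
  · rw [← nlsField_min_norm_sq_eq (hR _ (hmass t))]
    exact hu t
  · rw [isNLSSol_iff] at hv
    have hvmass t : ∑ j, normSq (v t j) = ∑ j, normSq (u₀ j) :=
      hv₀ ▸ sum_normSq_eq_of_hasDerivAt_nlsField hH hv t
    refine hK.eq_of_hasDerivAt (fun t ↦ ?_) hu (hv₀.trans hu₀.symm)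
    rw [nlsField_min_norm_sq_eq (hR _ (hvmass t))]
    exact hv t

/-- Global well-posedness and mass conservation for the Hamiltonian ODE
`i u' - H u = μ² (u ⊙ conj u ⊙ u)` with Hermitian `H`. -/
theorem stmt5 (d : ℕ) (hd : 1 ≤ d) (H : Matrix (Fin d) (Fin d) ℂ) (hH : H.IsHermitian)
    (μ : ℝ) (u₀ : Fin d → ℂ) :
    ∃ u : ℝ → Fin d → ℂ,
      IsNLSSol d H μ u ∧ u 0 = u₀ ∧
        (∀ v : ℝ → Fin d → ℂ, IsNLSSol d H μ v → v 0 = u₀ → v = u) ∧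
        ∀ t : ℝ, ∑ j, Complex.normSq (u t j) = ∑ j, Complex.normSq (u₀ j) :=
  stmt5_general d H hH μ u₀
end

section
/- Let m ≥ 1 be an integer, ω = (ω_0, …, ω_m) ∈ ℝ^{m+1}, T > 0 and t > 0. Then ∫_{{s ∈ ℝ_{≥0}^{m} : s_0 + … + s_{m−1} ≤ t}} exp(i ∑_{r=0}^{m−1} s_r ω_r) · exp(i (t − s_0 − … − s_{m−1}) ω_m) ds_0 ⋯ ds_{m−1} = (e^{t/T}/(2π)) · i^{m+1} · ∫_ℝ [∏_{r=0}^{m} (α + ω_r + i/T)^{−1}] e^{−iαt} dα. Moreover, for every t < 0 the integral ∫_ℝ [∏_{r=0}^{m} (α + ω_r + i/T)^{−1}] e^{−iαt} dα vanishes. -/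
/-!
Put `c r = ω r + i/T`. The one-sided exponential `e_c(s) = 1_{s ≥ 0} e^{isc}` (with `Im c > 0`)
has Fourier transform `i (c - 2πξ)⁻¹`, so after the substitution `α = -2πξ` the product of
resolvents is `i^{-(m+1)}` times the Fourier transform of the convolution
`g = e_{c 0} ⋆ ⋯ ⋆ e_{c m}`. For `m ≥ 1` there are at least two factors, all square integrable
and bounded, so `𝓕 g` is integrable; `g` is continuous since the jump of `e_{c m}` at `0` only
matters on a null hyperplane. Fourier inversion then turns the `α`-integral into
`2π i^{-(m+1)} g(t)`. Finally `g(t)` vanishes for `t < 0`, and for `t > 0` the integrand of `g`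
lives on the simplex, where the damping factors multiply to `e^{-t/T}`.
-/

open MeasureTheory Complex Filter Topology Set
open scoped FourierTransform Real

noncomputable section

namespace SimplexResolvent

lemma volume_sum_eq_zero {ι : Type*} [Fintype ι] [Nonempty ι] (t : ℝ) :
    volume {s : ι → ℝ | ∑ i, s i = t} = 0 := by
  classical
  let L : (ι → ℝ) →ₗ[ℝ] ℝ := ∑ i, LinearMap.proj i
  have hL : ∀ s, L s = ∑ i, s i := fun s => by simp [L]
  obtain ⟨i⟩ := ‹Nonempty ι›
  have hker : LinearMap.ker L ≠ ⊤ := fun h => by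
    have := LinearMap.mem_ker.1 (h ▸ Submodule.mem_top : Pi.single i 1 ∈ LinearMap.ker L)
    simp [hL] at this
  have hset : {s : ι → ℝ | ∑ i, s i = t} = (fun s => s + -Pi.single i t) ⁻¹' LinearMap.ker L := by
    ext s
    simp [hL, Finset.sum_add_distrib, add_neg_eq_zero]
  rw [hset, measure_preimage_add_right]
  exact Measure.addHaar_submodule volume _ hker

lemma integrable_inv_sq_add_sq {k : ℝ} (hk : k ≠ 0) :
    Integrable fun x : ℝ => (x ^ 2 + k ^ 2)⁻¹ := by
  have h := (integrable_inv_one_add_sq.comp_mul_left' (inv_ne_zero hk)).const_mul (k ^ 2)⁻¹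
  refine h.congr (ae_of_all _ fun x => ?_)
  field_simp
  ring

section OneSidedExp

def oneSidedExp (c : ℂ) : ℝ → ℂ := (Ici 0).indicator fun s => cexp (I * s * c)

variable {c : ℂ}

lemma oneSidedExp_of_nonneg {x : ℝ} (hx : 0 ≤ x) : oneSidedExp c x = cexp (I * x * c) :=
  indicator_of_mem hx _

lemma oneSidedExp_of_neg {x : ℝ} (hx : x < 0) : oneSidedExp c x = 0 :=
  indicator_of_notMem (not_le.2 hx) _

lemma norm_oneSidedExp_le_one (hc : 0 ≤ c.im) (x : ℝ) : ‖oneSidedExp c x‖ ≤ 1 := by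
  rcases lt_or_ge x 0 with hx | hx
  · simp [oneSidedExp_of_neg hx]
  · rw [oneSidedExp_of_nonneg hx, norm_exp, Real.exp_le_one_iff]
    simpa [mul_re] using mul_nonneg hx hc

lemma measurable_oneSidedExp : Measurable (oneSidedExp c) :=
  (by fun_prop : Measurable fun s : ℝ => cexp (I * s * c)).indicator measurableSet_Ici

lemma continuousAt_oneSidedExp {x : ℝ} (hx : x ≠ 0) : ContinuousAt (oneSidedExp c) x :=
  (by fun_prop : Continuous fun s : ℝ => cexp (I * s * c)).continuousOn.continuousAt_indicator
    (by simpa using hx)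

lemma integrable_oneSidedExp (hc : 0 < c.im) : Integrable (oneSidedExp c) := by
  rw [oneSidedExp, integrable_indicator_iff measurableSet_Ici,
    integrableOn_Ici_iff_integrableOn_Ioi]
  simpa only [mul_right_comm I c] using
    integrableOn_exp_mul_complex_Ioi (a := I * c) (by simpa [mul_re]) 0

lemma fourier_oneSidedExp (hc : 0 < c.im) (ξ : ℝ) :
    𝓕 (oneSidedExp c) ξ = I * (c - 2 * π * ξ)⁻¹ := by
  have hne : c - 2 * π * ξ ≠ 0 := fun h => by
    simpa [hc.ne'] using congrArg im h
  set a := I * (c - 2 * π * ξ) with ha_def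
  have ha : a.re < 0 := by simpa [a, mul_re] using hc
  calc 𝓕 (oneSidedExp c) ξ = ∫ v : ℝ in Ioi 0, cexp (a * v) := by
        rw [Real.fourier_real_eq_integral_exp_smul, ← integral_Ici_eq_integral_Ioi,
          ← integral_indicator measurableSet_Ici]
        congr 1 with v
        by_cases hv : v ∈ Ici (0 : ℝ)
        · simp only [oneSidedExp, indicator_of_mem hv, smul_eq_mul, ← Complex.exp_add]
          congr 1
          push_cast
          ring
        · simp [oneSidedExp, indicator_of_notMem hv]
    _ = I * (c - 2 * π * ξ)⁻¹ := by
        rw [integral_exp_mul_complex_Ioi ha, ha_def]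
        field_simp
        simp

lemma norm_I_mul_inv_sub_le (hc : 0 < c.im) (ξ : ℝ) :
    ‖I * (c - 2 * π * ξ)⁻¹‖ ≤ c.im⁻¹ := by
  rw [norm_mul, norm_I, one_mul, norm_inv]
  refine inv_anti₀ hc ((le_abs_self _).trans ?_)
  simpa using abs_im_le_norm (c - 2 * π * ξ)

lemma memLp_two_I_mul_inv_sub (hc : 0 < c.im) :
    MemLp (fun ξ : ℝ => I * (c - 2 * π * ξ)⁻¹) 2 := by
  refine (memLp_two_iff_integrable_sq_norm (by fun_prop)).2 ?_
  refine ((integrable_inv_sq_add_sq hc.ne').comp_sub_left c.re |>.comp_mul_left'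
    Real.two_pi_pos.ne').congr (ae_of_all _ fun ξ => ?_)
  dsimp only
  rw [norm_mul, norm_I, one_mul, norm_inv, inv_pow, Complex.sq_norm, normSq_apply]
  simp
  ring

end OneSidedExp

section SumConv

variable {ι : Type*} [Fintype ι]

/-- Convolution of `b` with the push-forward of `F` along `s ↦ ∑ i, s i`. -/
def sumConv (F : (ι → ℝ) → ℂ) (b : ℝ → ℂ) (t : ℝ) : ℂ := ∫ s, F s * b (t - ∑ i, s i)

variable {F : (ι → ℝ) → ℂ} {b : ℝ → ℂ}

lemma measurePreserving_sub_sum :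
    MeasurePreserving (fun p : (ι → ℝ) × ℝ => (p.1, p.2 - ∑ i, p.1 i))
      (volume.prod volume) (volume.prod volume) :=
  (MeasurePreserving.id _).skew_product (by fun_prop)
    (ae_of_all _ fun _ => (measurePreserving_sub_right volume _).map_eq)

lemma integrable_mul_comp_sub_sum (hF : Integrable F) (hb : Integrable b) :
    Integrable (fun p : (ι → ℝ) × ℝ => F p.1 * b (p.2 - ∑ i, p.1 i)) (volume.prod volume) :=
  measurePreserving_sub_sum.integrable_comp_of_integrable (hF.mul_prod hb)

lemma integrable_sumConv (hF : Integrable F) (hb : Integrable b) : Integrable (sumConv F b) :=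
  (integrable_mul_comp_sub_sum hF hb).integral_prod_right

lemma fourier_sumConv (hF : Integrable F) (hb : Integrable b) (ξ : ℝ) :
    𝓕 (sumConv F b) ξ =
      (∫ s, cexp (↑(-2 * π * (∑ i, s i) * ξ) * I) * F s) * 𝓕 b ξ := by
  set e : ℝ → ℂ := fun v => cexp (↑(-2 * π * v * ξ) * I)
  have he_add : ∀ u v, e (u + v) = e u * e v := fun u v => by
    simp only [e, ← Complex.exp_add]
    congr 1
    push_cast
    ring
  have he_norm : ∀ v, ‖e v‖ = 1 := fun v => norm_exp_ofReal_mul_I _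
  have hint : Integrable (Function.uncurry fun s t => e t * (F s * b (t - ∑ i, s i)))
      (volume.prod volume) := by
    refine (integrable_mul_comp_sub_sum hF hb).bdd_mul (c := 1) ?_
      (ae_of_all _ fun _ => (he_norm _).le)
    exact (by fun_prop : Continuous fun p : (ι → ℝ) × ℝ => e p.2).aestronglyMeasurable
  calc 𝓕 (sumConv F b) ξ = ∫ t, ∫ s, e t * (F s * b (t - ∑ i, s i)) := by
        simp_rw [Real.fourier_real_eq_integral_exp_smul, sumConv, smul_eq_mul, ← integral_const_mul]
        rfl
    _ = ∫ s, ∫ t, e t * (F s * b (t - ∑ i, s i)) := (integral_integral_swap hint).symm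
    _ = ∫ s, e (∑ i, s i) * F s * 𝓕 b ξ := by
        congr 1 with s
        rw [← integral_add_right_eq_self _ (∑ i, s i), Real.fourier_real_eq_integral_exp_smul,
          ← integral_const_mul]
        congr 1 with u
        rw [add_sub_cancel_right, he_add, smul_eq_mul]
        ring
    _ = _ := integral_mul_const _ _

lemma integral_exp_mul_prod {f : ι → ℝ → ℂ} (ξ : ℝ) :
    ∫ s : ι → ℝ, cexp (↑(-2 * π * (∑ i, s i) * ξ) * I) * ∏ i, f i (s i) =
      ∏ i, 𝓕 (f i) ξ := by
  simp_rw [Real.fourier_real_eq_integral_exp_smul, smul_eq_mul]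
  rw [← integral_fintype_prod_volume_eq_prod (fun i x => cexp (↑(-2 * π * x * ξ) * I) * f i x)]
  congr 1 with s
  rw [Finset.prod_mul_distrib, ← Complex.exp_sum]
  push_cast
  rw [Finset.mul_sum, Finset.sum_mul, Finset.sum_mul]

lemma continuous_sumConv [Nonempty ι] (hF : Integrable F) (hbm : Measurable b) {C : ℝ}
    (hbC : ∀ u, ‖b u‖ ≤ C) {u₀ : ℝ} (hb : ∀ u ≠ u₀, ContinuousAt b u) :
    Continuous (sumConv F b) := by
  refine continuous_iff_continuousAt.2 fun t => ?_
  have hnull : ∀ᵐ s : ι → ℝ, ∑ i, s i ≠ t - u₀ :=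
    measure_eq_zero_iff_ae_notMem.1 (volume_sum_eq_zero _)
  refine continuousAt_of_dominated (bound := fun s => ‖F s‖ * C) ?_ ?_ (hF.norm.mul_const C) ?_
  · exact Eventually.of_forall fun _ => hF.aestronglyMeasurable.mul
      (hbm.comp (by fun_prop)).aestronglyMeasurable
  · refine Eventually.of_forall fun _ => ae_of_all _ fun s => ?_
    rw [norm_mul]
    gcongr
    exact hbC _
  · filter_upwards [hnull] with s hs
    exact continuousAt_const.mul ((hb _ (by contrapose! hs; linarith)).comp (by fun_prop))

end SumConv

section Simplex

variable {m : ℕ} {c : Fin (m + 1) → ℂ}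

/-- The convolution `oneSidedExp (c 0) ⋆ ⋯ ⋆ oneSidedExp (c m)`, written as one integral over the
first `m` variables. -/
def simplexConv (c : Fin (m + 1) → ℂ) : ℝ → ℂ :=
  sumConv (fun s => ∏ r : Fin m, oneSidedExp (c r.castSucc) (s r)) (oneSidedExp (c (Fin.last m)))

lemma integrable_prod_oneSidedExp (hc : ∀ r, 0 < (c r).im) :
    Integrable fun s : Fin m → ℝ => ∏ r, oneSidedExp (c r.castSucc) (s r) :=
  Integrable.fintype_prod fun _ => integrable_oneSidedExp (hc _)

lemma integrable_simplexConv (hc : ∀ r, 0 < (c r).im) : Integrable (simplexConv c) :=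
  integrable_sumConv (integrable_prod_oneSidedExp hc) (integrable_oneSidedExp (hc _))

lemma fourier_simplexConv (hc : ∀ r, 0 < (c r).im) (ξ : ℝ) :
    𝓕 (simplexConv c) ξ = ∏ r, I * (c r - 2 * π * ξ)⁻¹ := by
  rw [simplexConv, fourier_sumConv (integrable_prod_oneSidedExp hc) (integrable_oneSidedExp (hc _)),
    integral_exp_mul_prod, Fin.prod_univ_castSucc]
  simp only [fourier_oneSidedExp (hc _)]

lemma continuous_simplexConv [NeZero m] (hc : ∀ r, 0 < (c r).im) : Continuous (simplexConv c) :=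
  continuous_sumConv (integrable_prod_oneSidedExp hc) measurable_oneSidedExp
    (norm_oneSidedExp_le_one (hc _).le) fun _ => continuousAt_oneSidedExp

lemma integrable_fourier_simplexConv [NeZero m] (hc : ∀ r, 0 < (c r).im) :
    Integrable (𝓕 (simplexConv c)) := by
  obtain ⟨n, rfl⟩ := Nat.exists_eq_succ_of_ne_zero (NeZero.ne m)
  have hsplit : 𝓕 (simplexConv c) = fun ξ : ℝ => I * (c 0 - 2 * π * ξ)⁻¹ *
      (I * (c 1 - 2 * π * ξ)⁻¹) * ∏ r : Fin n, I * (c r.succ.succ - 2 * π * ξ)⁻¹ := by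
    ext ξ
    rw [fourier_simplexConv hc, Fin.prod_univ_succ, Fin.prod_univ_succ, ← mul_assoc]
    rfl
  rw [hsplit]
  refine ((memLp_two_I_mul_inv_sub (hc _)).integrable_mul (memLp_two_I_mul_inv_sub (hc _))).mul_bdd
    (c := ∏ r : Fin n, (c r.succ.succ).im⁻¹) (by fun_prop) (ae_of_all _ fun ξ => ?_)
  rw [norm_prod]
  exact Finset.prod_le_prod (fun _ _ => norm_nonneg _) fun r _ => norm_I_mul_inv_sub_le (hc _) ξ

lemma prod_oneSidedExp_mul_eq_zero {t : ℝ} {s : Fin m → ℝ}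
    (hs : s ∉ {s : Fin m → ℝ | (∀ r, 0 ≤ s r) ∧ ∑ r, s r ≤ t}) :
    (∏ r, oneSidedExp (c r.castSucc) (s r)) * oneSidedExp (c (Fin.last m)) (t - ∑ r, s r) = 0 := by
  simp only [mem_ofPred_eq, not_and_or, not_forall, not_le] at hs
  rcases hs with ⟨r, hr⟩ | hsum
  · rw [Finset.prod_eq_zero (Finset.mem_univ r) (oneSidedExp_of_neg hr), zero_mul]
  · rw [oneSidedExp_of_neg (by linarith), mul_zero]

lemma simplexConv_of_neg {t : ℝ} (ht : t < 0) : simplexConv c t = 0 := by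
  refine integral_eq_zero_of_ae (ae_of_all _ fun s => prod_oneSidedExp_mul_eq_zero ?_)
  rintro ⟨hs, hsum⟩
  linarith [Finset.sum_nonneg fun r (_ : r ∈ Finset.univ) => hs r]

lemma simplexConv_ofReal_add_I_mul (ω : Fin (m + 1) → ℝ) (κ t : ℝ) :
    simplexConv (fun r => ω r + I * κ) t = Real.exp (-(κ * t)) *
      ∫ s in {s : Fin m → ℝ | (∀ r, 0 ≤ s r) ∧ ∑ r, s r ≤ t},
        cexp (I * ↑(∑ r, s r * ω r.castSucc)) * cexp (I * ↑((t - ∑ r, s r) * ω (Fin.last m))) := by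
  rw [← integral_const_mul, ← integral_indicator (by measurability)]
  refine integral_congr_ae (ae_of_all _ fun s => ?_)
  by_cases hs : s ∈ {s : Fin m → ℝ | (∀ r, 0 ≤ s r) ∧ ∑ r, s r ≤ t}
  · dsimp only
    rw [indicator_of_mem hs, oneSidedExp_of_nonneg (sub_nonneg.2 hs.2)]
    simp only [oneSidedExp_of_nonneg (hs.1 _), ← Complex.exp_sum, ← Complex.exp_add,
      Complex.ofReal_exp]
    congr 1
    push_cast
    simp only [mul_add, Finset.sum_add_distrib, mul_assoc, ← Finset.mul_sum, ← Finset.sum_mul]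
    linear_combination (κ * t : ℂ) * I_sq
  · rw [indicator_of_notMem hs]
    exact prod_oneSidedExp_mul_eq_zero (c := fun r => ω r + I * κ) hs

lemma integral_prod_inv_mul_exp [NeZero m] (hc : ∀ r, 0 < (c r).im) (t : ℝ) :
    ∫ α : ℝ, (∏ r, ((α : ℂ) + c r)⁻¹) * cexp (-(I * α * t)) =
      2 * π * (I ^ (m + 1))⁻¹ * simplexConv c t := by
  set h : ℝ → ℂ := fun α => (∏ r, ((α : ℂ) + c r)⁻¹) * cexp (-(I * α * t))
  have hscale : ∫ α, h α = (2 * π : ℝ) • ∫ ξ, h (-(2 * π) * ξ) := by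
    rw [Measure.integral_comp_mul_left, smul_smul, abs_inv, abs_neg,
      abs_of_pos Real.two_pi_pos, mul_inv_cancel₀ Real.two_pi_pos.ne', one_smul]
  have hpoint : ∀ ξ : ℝ, h (-(2 * π) * ξ) =
      (I ^ (m + 1))⁻¹ * (cexp (↑(2 * π * inner ℝ ξ t) * I) • 𝓕 (simplexConv c) ξ) := by
    intro ξ
    have hfactor : ∀ r, ((↑(-(2 * π) * ξ) : ℂ) + c r) = c r - 2 * π * ξ := fun r => by
      push_cast
      ring
    have hexp : -(I * ↑(-(2 * π) * ξ) * t) = ↑(2 * π * inner ℝ ξ t) * I := by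
      simp only [RCLike.inner_apply, conj_trivial]
      push_cast
      ring
    rw [fourier_simplexConv hc, smul_eq_mul, Finset.prod_mul_distrib, Finset.prod_const,
      Finset.card_univ, Fintype.card_fin, mul_left_comm,
      inv_mul_cancel_left₀ (pow_ne_zero _ I_ne_zero)]
    simp only [h, hfactor, hexp]
    exact mul_comm _ _
  rw [hscale, funext hpoint, integral_const_mul, ← Real.fourierInv_eq',
    (integrable_simplexConv hc).fourierInv_fourier_eq (integrable_fourier_simplexConv hc)
      (continuous_simplexConv hc).continuousAt, Complex.real_smul]
  push_cast
  ring

end Simplex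

end SimplexResolvent

open SimplexResolvent in
/-- The resolvent identity for the simplex time-integral of oscillatory exponentials appearing in
the Duhamel expansion, and the vanishing of the right-hand contour integral for negative times. -/
theorem stmt8 (m : ℕ) (hm : 1 ≤ m) (ω : Fin (m + 1) → ℝ) (T : ℝ) (hT : 0 < T) :
    (∀ t : ℝ, 0 < t →
      (∫ s in {s : Fin m → ℝ | (∀ r, 0 ≤ s r) ∧ ∑ r, s r ≤ t},
        Complex.exp (Complex.I * ((∑ r : Fin m, s r * ω r.castSucc : ℝ) : ℂ)) *
          Complex.exp (Complex.I * (((t - ∑ r : Fin m, s r) * ω (Fin.last m) : ℝ) : ℂ))) =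
        ((Real.exp (t / T) / (2 * Real.pi) : ℝ) : ℂ) * Complex.I ^ (m + 1) *
          ∫ α : ℝ, (∏ r : Fin (m + 1), ((α : ℂ) + (ω r : ℂ) + Complex.I / (T : ℂ))⁻¹) *
            Complex.exp (-(Complex.I * (α : ℂ) * (t : ℂ)))) ∧
      ∀ t : ℝ, t < 0 →
        (∫ α : ℝ, (∏ r : Fin (m + 1), ((α : ℂ) + (ω r : ℂ) + Complex.I / (T : ℂ))⁻¹) *
          Complex.exp (-(Complex.I * (α : ℂ) * (t : ℂ)))) = 0 := by
  have : NeZero m := ⟨by omega⟩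
  set c : Fin (m + 1) → ℂ := fun r => ω r + I * ↑T⁻¹
  have hc : ∀ r, 0 < (c r).im := fun r => by simpa [c] using hT
  have hresolvent : ∀ t : ℝ,
      ∫ α : ℝ, (∏ r, ((α : ℂ) + ω r + I / T)⁻¹) * cexp (-(I * α * t)) =
        2 * π * (I ^ (m + 1))⁻¹ * simplexConv c t := fun t => by
    rw [← integral_prod_inv_mul_exp hc t]
    simp only [c, add_assoc, ofReal_inv, div_eq_mul_inv]
  refine ⟨fun t _ => ?_, fun t ht => by rw [hresolvent, simplexConv_of_neg ht, mul_zero]⟩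
  have hcancel : ∀ X : ℂ, ((Real.exp (t / T) / (2 * π) : ℝ) : ℂ) * I ^ (m + 1) *
      (2 * π * (I ^ (m + 1))⁻¹ * (Real.exp (-(T⁻¹ * t)) * X)) = X := fun X => by
    have hI : I ^ (m + 1) ≠ 0 := pow_ne_zero _ I_ne_zero
    push_cast
    field_simp
    rw [← Complex.exp_add, add_neg_cancel, Complex.exp_zero, one_mul]
  rw [hresolvent, simplexConv_ofReal_add_I_mul, hcancel]
end
end

section
/- Let d ≥ 1 and q ≥ 1 be integers, let Ψ = (ψ_{jk}) be distributed according to the Haar probability measure on the unitary group U(d), and let j_1,…,j_q, k_1,…,k_q, j_1',…,j_q', k_1',…,k_q' ∈ {1,…,d}. If the multiset {k_1,…,k_q} differs from the multiset {k_1',…,k_q'}, or the multiset {j_1,…,j_q} differs from the multiset {j_1',…,j_q'}, then E[ ψ_{j_1 k_1} ⋯ ψ_{j_q k_q} · conj(ψ_{j_1' k_1'}) ⋯ conj(ψ_{j_q' k_q'}) ] = 0. -/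
/-!
Multiplying `Ψ` by a diagonal unitary `diagonal D` on the left (resp. right) multiplies the
monomial by `∏ D (jᵢ) * ∏ conj (D (jᵢ'))` (resp. the same with the `k`s), and leaves the Haar
measure invariant: on the right because a left-invariant probability measure on a compact group
is the Haar measure, hence also right-invariant. If the multiplicities `m ≠ m'` of some index `a`
differ, the phase `z` at `a` with `z ^ (m - m') = -1` makes this factor `-1`, so the integral
equals its own negative.
-/

open MeasureTheory Matrix ComplexConjugate

instance Matrix.unitaryGroup.compactSpace {𝕜 n : Type*} [RCLike 𝕜] [Fintype n] [DecidableEq n] :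
    CompactSpace (unitaryGroup n 𝕜) := by
  have hK : IsCompact
      (Set.univ.pi fun _ : n => Set.univ.pi fun _ : n => Metric.closedBall (0 : 𝕜) 1) :=
    isCompact_univ_pi fun _ => isCompact_univ_pi fun _ => isCompact_closedBall _ _
  exact isCompact_iff_compactSpace.mp <|
    hK.of_isClosed_subset (isClosed_unitary (R := Matrix n n 𝕜))
      fun _ hU i _ j _ => mem_closedBall_zero_iff.mpr (entry_norm_bound_of_unitary hU i j)

theorem map_mul_right_eq_self_of_map_mul_left {G : Type*} [Group G] [TopologicalSpace G]
    [IsTopologicalGroup G] [CompactSpace G] [MeasurableSpace G] [BorelSpace G]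
    (μ : Measure G) [IsProbabilityMeasure μ] (hμ : ∀ g : G, μ.map (g * ·) = μ) (g : G) :
    μ.map (· * g) = μ := by
  have : μ.IsMulLeftInvariant := ⟨hμ⟩
  have : μ.IsOpenPosMeasure :=
    isOpenPosMeasure_of_mulLeftInvariant_of_compact Set.univ isCompact_univ (by simp)
  have : μ.IsHaarMeasure := {}
  have : IsProbabilityMeasure (μ.map (· * g)) :=
    Measure.isProbabilityMeasure_map (measurable_mul_const g).aemeasurable
  exact Measure.isHaarMeasure_eq_of_isProbabilityMeasure _ _

theorem integral_eq_zero_of_map_eq_of_comp_eq_neg {X E : Type*} [MeasurableSpace X]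
    [NormedAddCommGroup E] [NormedSpace ℝ E] {μ : Measure X} {F : X → E} {T : X → X}
    (hF : AEStronglyMeasurable F μ) (hT : Measurable T) (hTμ : μ.map T = μ)
    (hFT : ∀ x, F (T x) = -F x) :
    ∫ x, F x ∂μ = 0 := by
  have : IsAddTorsionFree E := .of_isTorsionFree ℝ E
  refine self_eq_neg.mp ?_
  calc ∫ x, F x ∂μ = ∫ x, F (T x) ∂μ := by
        conv_lhs => rw [← hTμ]
        exact integral_map hT.aemeasurable (by rwa [hTμ])
    _ = -∫ x, F x ∂μ := by simp only [hFT, integral_neg]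

theorem Complex.exists_norm_eq_one_zpow_eq_neg_one {n : ℤ} (hn : n ≠ 0) :
    ∃ z : ℂ, ‖z‖ = 1 ∧ z ^ n = -1 :=
  ⟨exp (↑(Real.pi / n) * I), norm_exp_ofReal_mul_I _, by
    rw [← exp_int_mul]; push_cast; field_simp; exact exp_pi_mul_I⟩

section Phase

variable {ι n : Type*} [Fintype ι] [DecidableEq n]

theorem prod_mulSingle_comp_eq_pow_count (f : ι → n) (a : n) (z : ℂ) :
    ∏ i, (Pi.mulSingle a z : n → ℂ) (f i) = z ^ (Finset.univ.val.map f).count a := by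
  simp only [Pi.mulSingle_apply, Finset.prod_ite, Finset.prod_const, one_pow, mul_one,
    Multiset.count_map, eq_comm]
  rfl

theorem exists_phase_prod_mul_prod_conj_eq_neg_one (f f' : ι → n)
    (h : Finset.univ.val.map f ≠ Finset.univ.val.map f') :
    ∃ D : n → ℂ, (∀ j, ‖D j‖ = 1) ∧ (∏ i, D (f i)) * ∏ i, conj (D (f' i)) = -1 := by
  obtain ⟨a, ha⟩ := not_forall.mp (mt Multiset.ext.mpr h)
  obtain ⟨z, hz, hz_pow⟩ := Complex.exists_norm_eq_one_zpow_eq_neg_one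
    (sub_ne_zero.mpr (Nat.cast_injective.ne ha) :
      ((Finset.univ.val.map f).count a : ℤ) - (Finset.univ.val.map f').count a ≠ 0)
  have hz0 : z ≠ 0 := norm_ne_zero_iff.mp (hz ▸ one_ne_zero)
  refine ⟨Pi.mulSingle a z, fun j => ?_, ?_⟩
  · by_cases hj : j = a
    · simp [hj, hz]
    · simp [hj]
  · rw [← map_prod, prod_mulSingle_comp_eq_pow_count, prod_mulSingle_comp_eq_pow_count,
      map_pow, ← Complex.inv_eq_conj hz, ← hz_pow, zpow_sub₀ hz0]
    simp [div_eq_mul_inv]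

end Phase

theorem Matrix.diagonal_mem_unitaryGroup {𝕜 n : Type*} [RCLike 𝕜] [Fintype n] [DecidableEq n]
    {D : n → 𝕜} (hD : ∀ j, ‖D j‖ = 1) : diagonal D ∈ unitaryGroup n 𝕜 := by
  simp [mem_unitaryGroup_iff, star_eq_conjTranspose, RCLike.mul_conj, hD]

section EntryMonomial

variable {ι n : Type*} [Fintype ι]

def entryMonomial (js ks js' ks' : ι → n) (A : Matrix n n ℂ) : ℂ :=
  (∏ i, A (js i) (ks i)) * ∏ i, conj (A (js' i) (ks' i))

variable (js ks js' ks' : ι → n)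

@[fun_prop]
theorem continuous_entryMonomial : Continuous (entryMonomial js ks js' ks') := by
  unfold entryMonomial; fun_prop

theorem entryMonomial_diagonal_mul [Fintype n] [DecidableEq n] (D : n → ℂ) (A : Matrix n n ℂ) :
    entryMonomial js ks js' ks' (diagonal D * A) =
      ((∏ i, D (js i)) * ∏ i, conj (D (js' i))) * entryMonomial js ks js' ks' A := by
  simp only [entryMonomial, diagonal_mul, map_mul, Finset.prod_mul_distrib]
  ring

theorem entryMonomial_mul_diagonal [Fintype n] [DecidableEq n] (D : n → ℂ) (A : Matrix n n ℂ) :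
    entryMonomial js ks js' ks' (A * diagonal D) =
      ((∏ i, D (ks i)) * ∏ i, conj (D (ks' i))) * entryMonomial js ks js' ks' A := by
  simp only [entryMonomial, mul_diagonal, map_mul, Finset.prod_mul_distrib]
  ring

end EntryMonomial

theorem stmt9_general (d q : ℕ)
    [MeasurableSpace (Matrix.unitaryGroup (Fin d) ℂ)]
    [BorelSpace (Matrix.unitaryGroup (Fin d) ℂ)]
    (P : Measure (Matrix.unitaryGroup (Fin d) ℂ)) [IsProbabilityMeasure P]
    (hP : ∀ g : Matrix.unitaryGroup (Fin d) ℂ, P.map (fun x => g * x) = P)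
    (js ks js' ks' : Fin q → Fin d)
    (h : Multiset.map ks Finset.univ.val ≠ Multiset.map ks' Finset.univ.val ∨
      Multiset.map js Finset.univ.val ≠ Multiset.map js' Finset.univ.val) :
    (∫ Ψ, (∏ i, Ψ.1 (js i) (ks i)) *
      ∏ i, (starRingEnd ℂ) (Ψ.1 (js' i) (ks' i)) ∂P) = 0 := by
  have hF : AEStronglyMeasurable
      (fun Ψ : unitaryGroup (Fin d) ℂ ↦ entryMonomial js ks js' ks' Ψ.1) P :=
    (continuous_entryMonomial js ks js' ks' |>.comp continuous_subtype_val).aestronglyMeasurable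
  rcases h with hcols | hrows
  · obtain ⟨D, hD, hD_prod⟩ := exists_phase_prod_mul_prod_conj_eq_neg_one ks ks' hcols
    let g : unitaryGroup (Fin d) ℂ := ⟨diagonal D, diagonal_mem_unitaryGroup hD⟩
    refine integral_eq_zero_of_map_eq_of_comp_eq_neg hF (measurable_mul_const g)
      (map_mul_right_eq_self_of_map_mul_left P hP g) fun Ψ => ?_
    change entryMonomial js ks js' ks' (Ψ.1 * diagonal D) = -entryMonomial js ks js' ks' Ψ.1
    rw [entryMonomial_mul_diagonal, hD_prod, neg_one_mul]
  · obtain ⟨D, hD, hD_prod⟩ := exists_phase_prod_mul_prod_conj_eq_neg_one js js' hrows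
    let g : unitaryGroup (Fin d) ℂ := ⟨diagonal D, diagonal_mem_unitaryGroup hD⟩
    refine integral_eq_zero_of_map_eq_of_comp_eq_neg hF (measurable_const_mul g) (hP g)
      fun Ψ => ?_
    change entryMonomial js ks js' ks' (diagonal D * Ψ.1) = -entryMonomial js ks js' ks' Ψ.1
    rw [entryMonomial_diagonal_mul, hD_prod, neg_one_mul]

/-- Vanishing criterion of the Weingarten formula: for `Ψ` Haar-distributed on `U(d)`, the
expectation `E[ψ_{j₁k₁}⋯ψ_{j_qk_q} conj(ψ_{j₁'k₁'})⋯conj(ψ_{j_q'k_q'})]` vanishes unless the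
rows and the columns of the conjugated factors match those of the unconjugated factors as
multisets. -/
theorem stmt9 (d q : ℕ) (hd : 1 ≤ d) (hq : 1 ≤ q)
    [MeasurableSpace (Matrix.unitaryGroup (Fin d) ℂ)]
    [BorelSpace (Matrix.unitaryGroup (Fin d) ℂ)]
    (P : Measure (Matrix.unitaryGroup (Fin d) ℂ)) [IsProbabilityMeasure P]
    (hP : ∀ g : Matrix.unitaryGroup (Fin d) ℂ, P.map (fun x => g * x) = P)
    (js ks js' ks' : Fin q → Fin d)
    (h : Multiset.map ks Finset.univ.val ≠ Multiset.map ks' Finset.univ.val ∨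
      Multiset.map js Finset.univ.val ≠ Multiset.map js' Finset.univ.val) :
    (∫ Ψ, (∏ i, Ψ.1 (js i) (ks i)) *
      ∏ i, (starRingEnd ℂ) (Ψ.1 (js' i) (ks' i)) ∂P) = 0 :=
  stmt9_general d q P hP js ks js' ks' h
end

section
/- For every integer q ≥ 1 there is a constant C_q such that for all integers d ≥ q and all choices of indices j_1,…,j_q, k_1,…,k_q, j_1',…,j_q', k_1',…,k_q' ∈ {1,…,d}: | E[ ψ_{j_1 k_1} ⋯ ψ_{j_q k_q} · conj(ψ_{j_1' k_1'}) ⋯ conj(ψ_{j_q' k_q'}) ] | ≤ C_q · d^{−q}. -/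
/-!
Left invariance lets one replace `Ψ` by `G * Ψ` for any fixed unitary `G`. Averaging over the
`(q + 1) ^ d` unitaries `G_ε = F * diag (ζ ^ ε_l)`, where `F` is a normalised Fourier matrix (all
entries of modulus `d ^ (-1/2)`) and `ζ` a primitive `(q + 1)`-th root of unity, bounds
`E |ψ_jk| ^ (2q)` by `d ^ (-q)` times the `2q`-th moment of `∑_l ζ ^ ε_l c_l` over uniformly
distributed `ε`, where `c_l = √d F_jl ψ_lk` is a unit vector. In degree at most `q` these phases
behave like independent uniform phases: expanding the moment, only pairs of index tuples that are
rearrangements of each other survive, and a tuple has at most `q!` rearrangements, so the moment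
is at most `q!`. The mixed moment is reduced to these by AM-GM,
`∏_{s ≤ 2q} |x_s| ≤ (2q)⁻¹ ∑_s |x_s| ^ (2q)`.
-/

open Finset MeasureTheory ComplexConjugate
open scoped Nat

theorem IsPrimitiveRoot.sum_pow_mul_conj_pow {ζ : ℂ} {m : ℕ} (hζ : IsPrimitiveRoot ζ m)
    {a b : ℕ} (ha : a < m) (hb : b < m) :
    ∑ e ∈ range m, ζ ^ (a * e) * conj (ζ ^ (b * e)) = if a = b then (m : ℂ) else 0 := by
  have hζ_unit (n : ℕ) : ζ ^ n * conj ζ ^ n = 1 := by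
    rw [← map_pow, Complex.mul_conj', norm_pow, hζ.norm'_eq_one (by omega)]
    simp
  simp only [map_pow]
  split_ifs with hab
  · simp [hab, hζ_unit]
  have hη_ne_one : ζ ^ a * conj ζ ^ b ≠ 1 := fun hη => hab <| hζ.pow_inj ha hb <| by
    rw [← mul_one (ζ ^ a), ← hζ_unit b, mul_comm (ζ ^ b), ← mul_assoc, hη, one_mul]
  have hη_pow : (ζ ^ a * conj ζ ^ b) ^ m = 1 := by
    rw [mul_pow, ← pow_mul, ← pow_mul, mul_comm a, mul_comm b, pow_mul, pow_mul, ← map_pow,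
      hζ.pow_eq_one, one_pow, map_one, one_pow, one_mul]
  simp_rw [pow_mul, ← mul_pow]
  rw [geom_sum_eq hη_ne_one, hη_pow, sub_self, zero_div]

theorem IsPrimitiveRoot.mem_unitary {ζ : ℂ} {m : ℕ} (hζ : IsPrimitiveRoot ζ m) (hm : m ≠ 0) :
    ζ ∈ unitary ℂ := by
  rw [Unitary.mem_iff_star_mul_self, Complex.star_def, Complex.conj_mul', hζ.norm'_eq_one hm]
  simp

theorem exists_mem_unitaryGroup_forall_sq_norm_eq {d : ℕ} (hd : d ≠ 0) :
    ∃ U ∈ Matrix.unitaryGroup (Fin d) ℂ, ∀ a b, ‖U a b‖ ^ 2 = (d : ℝ)⁻¹ := by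
  set ω := Complex.exp (2 * Real.pi * Complex.I / d)
  have hω : IsPrimitiveRoot ω d := Complex.isPrimitiveRoot_exp d hd
  set s : ℝ := (Real.sqrt d)⁻¹
  have hs : s ^ 2 = (d : ℝ)⁻¹ := by rw [inv_pow, Real.sq_sqrt d.cast_nonneg]
  refine ⟨Matrix.of fun a b => ω ^ ((a : ℕ) * b) * s, ?_, fun a b => ?_⟩
  · rw [Matrix.mem_unitaryGroup_iff']
    ext a b
    have hsum := hω.sum_pow_mul_conj_pow b.isLt a.isLt
    rw [← Fin.sum_univ_eq_sum_range] at hsum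
    simp only [Matrix.mul_apply, Matrix.star_apply, Matrix.of_apply, star_mul', Matrix.one_apply]
    have hterm (l : Fin d) : star (ω ^ ((l : ℕ) * a)) * star (s : ℂ) * (ω ^ ((l : ℕ) * b) * s)
        = ((d : ℂ)⁻¹) * (ω ^ ((b : ℕ) * l) * conj (ω ^ ((a : ℕ) * l))) := by
      rw [← Complex.ofReal_natCast, ← Complex.ofReal_inv, ← hs, Complex.star_def,
        Complex.conj_ofReal]
      push_cast
      rw [mul_comm (l : ℕ) a, mul_comm (l : ℕ) b]
      ring
    simp only [hterm, ← mul_sum, hsum, Fin.val_inj, eq_comm (a := b)]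
    split_ifs <;> simp [hd]
  · simp [norm_pow, hω.norm'_eq_one hd, hs]

theorem Matrix.diagonal_mem_unitaryGroup_s10 {n α : Type*} [Fintype n] [DecidableEq n] [CommRing α]
    [StarRing α] {v : n → α} (hv : ∀ i, v i ∈ unitary α) :
    Matrix.diagonal v ∈ Matrix.unitaryGroup n α := by
  rw [Matrix.mem_unitaryGroup_iff, Matrix.star_eq_conjTranspose, Matrix.diagonal_conjTranspose,
    Matrix.diagonal_mul_diagonal, ← Matrix.diagonal_one]
  exact congrArg Matrix.diagonal (funext fun i => Unitary.mul_star_self_of_mem (hv i))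

theorem Matrix.sum_sq_norm_apply_of_mem_unitaryGroup {n : Type*} [Fintype n] [DecidableEq n]
    {U : Matrix n n ℂ} (hU : U ∈ Matrix.unitaryGroup n ℂ) (k : n) :
    ∑ l, ‖U l k‖ ^ 2 = 1 := by
  have hkk := congrFun (congrFun (Matrix.mem_unitaryGroup_iff'.mp hU) k) k
  simp only [Matrix.mul_apply, Matrix.star_apply, Matrix.one_apply_eq, Complex.star_def,
    Complex.conj_mul'] at hkk
  exact_mod_cast hkk

theorem prod_comp_eq_prod_pow_count {M α : Type*} [CommMonoid M] [Fintype α] [DecidableEq α]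
    {n : ℕ} (f : Fin n → α) (h : α → M) :
    ∏ i, h (f i) = ∏ a, h a ^ (List.ofFn f).count a := by
  rw [← Function.comp_def, ← List.prod_ofFn, ← List.map_ofFn, prod_list_map_count]
  refine prod_subset (subset_univ _) fun a _ ha => ?_
  rw [List.count_eq_zero_of_not_mem (by simpa using ha), pow_zero]

theorem prod_comp_eq_of_perm_ofFn {M α : Type*} [CommMonoid M] {n : ℕ} {f g : Fin n → α}
    (hfg : (List.ofFn f).Perm (List.ofFn g)) (c : α → M) : ∏ i, c (f i) = ∏ i, c (g i) := by
  simpa only [List.map_ofFn, List.prod_ofFn, Function.comp_apply] using (hfg.map c).prod_eq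

theorem card_filter_perm_ofFn_le {α : Type*} [Fintype α] [DecidableEq α] {n : ℕ}
    (f : Fin n → α) :
    #{g : Fin n → α | (List.ofFn f).Perm (List.ofFn g)} ≤ n ! := by
  calc #{g : Fin n → α | (List.ofFn f).Perm (List.ofFn g)}
      ≤ (List.ofFn f).permutations.toFinset.card :=
        card_le_card_of_injOn List.ofFn
          (fun g hg => by simpa [List.mem_permutations] using (mem_filter.mp hg).2.symm)
          (fun _ _ _ _ h => List.ofFn_injective h)
    _ ≤ (List.ofFn f).permutations.length := List.toFinset_card_le _
    _ = n ! := by rw [List.length_permutations, List.length_ofFn]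

theorem IsPrimitiveRoot.sum_prod_pow_mul_conj_prod_pow {ζ : ℂ} {m q : ℕ}
    (hζ : IsPrimitiveRoot ζ m) (hqm : q < m) {ι : Type*} [Fintype ι] [DecidableEq ι]
    (f g : Fin q → ι) :
    ∑ ε : ι → Fin m, (∏ i, ζ ^ (ε (f i) : ℕ)) * conj (∏ i, ζ ^ (ε (g i) : ℕ))
      = if (List.ofFn f).Perm (List.ofFn g) then (m : ℂ) ^ Fintype.card ι else 0 := by
  set cf := fun l => (List.ofFn f).count l
  set cg := fun l => (List.ofFn g).count l
  have hcount (f : Fin q → ι) (l : ι) : (List.ofFn f).count l < m :=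
    (List.count_le_length.trans (List.length_ofFn).le).trans_lt hqm
  have hfactor (ε : ι → Fin m) :
      (∏ i, ζ ^ (ε (f i) : ℕ)) * conj (∏ i, ζ ^ (ε (g i) : ℕ))
        = ∏ l, ζ ^ (cf l * ε l) * conj (ζ ^ (cg l * ε l)) := by
    rw [map_prod, prod_comp_eq_prod_pow_count f fun l => ζ ^ (ε l : ℕ),
      prod_comp_eq_prod_pow_count g fun l => conj (ζ ^ (ε l : ℕ)), ← prod_mul_distrib]
    simp only [map_pow, ← pow_mul, mul_comm, cf, cg]
  calc ∑ ε : ι → Fin m, (∏ i, ζ ^ (ε (f i) : ℕ)) * conj (∏ i, ζ ^ (ε (g i) : ℕ))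
      = ∏ l, ∑ e : Fin m, ζ ^ (cf l * e) * conj (ζ ^ (cg l * e)) := by
        simp only [hfactor]
        exact (Fintype.prod_sum fun l (e : Fin m) => ζ ^ (cf l * e) * conj (ζ ^ (cg l * e))).symm
    _ = ∏ l, if cf l = cg l then (m : ℂ) else 0 := prod_congr rfl fun l _ => by
        rw [Fin.sum_univ_eq_sum_range (fun e => ζ ^ (cf l * e) * conj (ζ ^ (cg l * e))),
          hζ.sum_pow_mul_conj_pow (hcount f l) (hcount g l)]
    _ = _ := by simp [prod_ite_zero, List.perm_iff_count, cf, cg]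

theorem IsPrimitiveRoot.sum_norm_sum_pow_mul_pow_eq {ζ : ℂ} {m q : ℕ}
    (hζ : IsPrimitiveRoot ζ m) (hqm : q < m) {ι : Type*} [Fintype ι] [DecidableEq ι]
    (c : ι → ℂ) :
    ∑ ε : ι → Fin m, ‖∑ l, ζ ^ (ε l : ℕ) * c l‖ ^ (2 * q)
      = m ^ Fintype.card ι * ∑ f : Fin q → ι, ∑ g : Fin q → ι,
          if (List.ofFn f).Perm (List.ofFn g) then ‖∏ i, c (f i)‖ ^ 2 else 0 := by
  have hexpand (ε : ι → Fin m) : (∑ l, ζ ^ (ε l : ℕ) * c l) ^ q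
      = ∑ f : Fin q → ι, (∏ i, ζ ^ (ε (f i) : ℕ)) * ∏ i, c (f i) := by
    simp only [Fintype.sum_pow, prod_mul_distrib]
  apply Complex.ofReal_injective
  push_cast
  calc ∑ ε : ι → Fin m, (‖∑ l, ζ ^ (ε l : ℕ) * c l‖ : ℂ) ^ (2 * q)
      = ∑ ε : ι → Fin m, ∑ f : Fin q → ι, ∑ g : Fin q → ι,
          ((∏ i, ζ ^ (ε (f i) : ℕ)) * conj (∏ i, ζ ^ (ε (g i) : ℕ)))
            * ((∏ i, c (f i)) * conj (∏ i, c (g i))) := by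
        refine sum_congr rfl fun ε _ => ?_
        rw [pow_mul', ← Complex.ofReal_pow, ← norm_pow, ← Complex.mul_conj', hexpand, map_sum,
          sum_mul_sum]
        simp only [map_mul]
        exact sum_congr rfl fun f _ => sum_congr rfl fun g _ => by ring
    _ = ∑ f : Fin q → ι, ∑ g : Fin q → ι,
          (if (List.ofFn f).Perm (List.ofFn g) then (m : ℂ) ^ Fintype.card ι else 0)
            * ((∏ i, c (f i)) * conj (∏ i, c (g i))) := by
        rw [sum_comm]
        refine sum_congr rfl fun f _ => ?_
        rw [sum_comm]
        simp only [← sum_mul, hζ.sum_prod_pow_mul_conj_prod_pow hqm]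
    _ = _ := by
        rw [mul_sum]
        refine sum_congr rfl fun f _ => ?_
        rw [mul_sum]
        refine sum_congr rfl fun g _ => ?_
        split_ifs with hfg
        · rw [← prod_comp_eq_of_perm_ofFn hfg, Complex.mul_conj']
          push_cast
          ring
        · simp

theorem IsPrimitiveRoot.sum_norm_sum_pow_mul_pow_le {ζ : ℂ} {m q : ℕ}
    (hζ : IsPrimitiveRoot ζ m) (hqm : q < m) {ι : Type*} [Fintype ι] [DecidableEq ι]
    (c : ι → ℂ) :
    ∑ ε : ι → Fin m, ‖∑ l, ζ ^ (ε l : ℕ) * c l‖ ^ (2 * q)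
      ≤ m ^ Fintype.card ι * q ! * (∑ l, ‖c l‖ ^ 2) ^ q := by
  have hrow (f : Fin q → ι) :
      (∑ g : Fin q → ι, if (List.ofFn f).Perm (List.ofFn g) then ‖∏ i, c (f i)‖ ^ 2 else 0)
        ≤ q ! * ‖∏ i, c (f i)‖ ^ 2 := by
    rw [sum_ite, sum_const_zero, add_zero, sum_const, nsmul_eq_mul]
    gcongr
    exact_mod_cast card_filter_perm_ofFn_le f
  have htotal : ∑ f : Fin q → ι, ‖∏ i, c (f i)‖ ^ 2 = (∑ l, ‖c l‖ ^ 2) ^ q := by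
    simp only [Fintype.sum_pow, norm_prod, prod_pow]
  rw [hζ.sum_norm_sum_pow_mul_pow_eq hqm, mul_assoc, ← htotal]
  gcongr
  rw [mul_sum]
  exact sum_le_sum fun f _ => hrow f

theorem Real.prod_le_sum_pow_card_div_card {ι : Type*} [Fintype ι] [Nonempty ι] {y : ι → ℝ}
    (hy : ∀ i, 0 ≤ y i) : ∏ i, y i ≤ (∑ i, y i ^ Fintype.card ι) / Fintype.card ι := by
  have hn : (Fintype.card ι : ℝ) ≠ 0 := by positivity
  have hamgm := Real.geom_mean_le_arith_mean_weighted univ (fun _ => (Fintype.card ι : ℝ)⁻¹)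
    (fun i => y i ^ Fintype.card ι) (fun _ _ => by positivity)
    (by simp [hn]) (fun i _ => pow_nonneg (hy i) _)
  simp only [Real.pow_rpow_inv_natCast (hy _) Fintype.card_ne_zero, ← mul_sum] at hamgm
  rwa [div_eq_inv_mul]

theorem integral_le_of_sum_comp_mul_left_le {G : Type*} [Group G] [MeasurableSpace G]
    [MeasurableMul G] (μ : Measure G) [IsProbabilityMeasure μ] [μ.IsMulLeftInvariant]
    {ι : Type*} [Fintype ι] [Nonempty ι] (g : ι → G) {f : G → ℝ} (hf : Integrable f μ)
    {B : ℝ} (hB : ∀ x, ∑ i, f (g i * x) ≤ Fintype.card ι * B) :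
    ∫ x, f x ∂μ ≤ B := by
  have hcard : (0 : ℝ) < Fintype.card ι := by exact_mod_cast Fintype.card_pos
  refine le_of_mul_le_mul_left ?_ hcard
  calc (Fintype.card ι : ℝ) * ∫ x, f x ∂μ = ∑ i, ∫ x, f (g i * x) ∂μ := by
        simp [integral_mul_left_eq_self]
    _ = ∫ x, ∑ i, f (g i * x) ∂μ :=
        (integral_finsetSum _ fun i _ => hf.comp_mul_left (g i)).symm
    _ ≤ ∫ _, (Fintype.card ι : ℝ) * B ∂μ :=
        integral_mono (integrable_finsetSum _ fun i _ => hf.comp_mul_left (g i))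
          (integrable_const _) hB
    _ = Fintype.card ι * B := by simp

section UnitaryGroup

variable {d : ℕ} [MeasurableSpace (Matrix.unitaryGroup (Fin d) ℂ)]
  [BorelSpace (Matrix.unitaryGroup (Fin d) ℂ)]

theorem integrable_norm_apply_pow (P : Measure (Matrix.unitaryGroup (Fin d) ℂ))
    [IsFiniteMeasure P] (j k : Fin d) (n : ℕ) :
    Integrable (fun Ψ : Matrix.unitaryGroup (Fin d) ℂ => ‖Ψ.1 j k‖ ^ n) P :=
  Integrable.of_bound
    ((continuous_subtype_val.matrix_elem j k).norm.pow n).aestronglyMeasurable 1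
    (ae_of_all _ fun Ψ => by
      rw [norm_pow, norm_norm]
      exact pow_le_one₀ (norm_nonneg _) (entry_norm_bound_of_unitary Ψ.2 j k))

theorem integral_norm_apply_pow_le (P : Measure (Matrix.unitaryGroup (Fin d) ℂ))
    [IsProbabilityMeasure P] [P.IsMulLeftInvariant] (q : ℕ) (j k : Fin d) :
    ∫ Ψ, ‖Ψ.1 j k‖ ^ (2 * q) ∂P ≤ q ! / d ^ q := by
  obtain ⟨U, hU, hU_norm⟩ := exists_mem_unitaryGroup_forall_sq_norm_eq j.pos.ne'
  set ζ := Complex.exp (2 * Real.pi * Complex.I / (q + 1 : ℕ))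
  have hζ : IsPrimitiveRoot ζ (q + 1) := Complex.isPrimitiveRoot_exp _ q.succ_ne_zero
  let G (ε : Fin d → Fin (q + 1)) : Matrix.unitaryGroup (Fin d) ℂ :=
    ⟨U * Matrix.diagonal fun l => ζ ^ (ε l : ℕ), Submonoid.mul_mem _ hU <|
      Matrix.diagonal_mem_unitaryGroup_s10 fun l => pow_mem (hζ.mem_unitary q.succ_ne_zero) _⟩
  refine integral_le_of_sum_comp_mul_left_le P G (integrable_norm_apply_pow P j k _) fun Ψ => ?_
  have hentry (ε : Fin d → Fin (q + 1)) :
      (G ε * Ψ).1 j k = ∑ l, ζ ^ (ε l : ℕ) * (U j l * Ψ.1 l k) := by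
    change (U * Matrix.diagonal (fun l => ζ ^ (ε l : ℕ)) * Ψ.1) j k = _
    rw [Matrix.mul_apply]
    exact sum_congr rfl fun l _ => by rw [Matrix.mul_diagonal]; ring
  have hcol : ∑ l, ‖U j l * Ψ.1 l k‖ ^ 2 = (d : ℝ)⁻¹ := by
    simp only [norm_mul, mul_pow, hU_norm, ← mul_sum,
      Matrix.sum_sq_norm_apply_of_mem_unitaryGroup Ψ.2, mul_one]
  calc ∑ ε, ‖(G ε * Ψ).1 j k‖ ^ (2 * q)
      = ∑ ε : Fin d → Fin (q + 1), ‖∑ l, ζ ^ (ε l : ℕ) * (U j l * Ψ.1 l k)‖ ^ (2 * q) := by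
        simp only [hentry]
    _ ≤ (q + 1 : ℕ) ^ d * q ! * (d : ℝ)⁻¹ ^ q := by
        simpa only [hcol, Fintype.card_fin] using
          hζ.sum_norm_sum_pow_mul_pow_le q.lt_succ_self fun l => U j l * Ψ.1 l k
    _ = Fintype.card (Fin d → Fin (q + 1)) * (q ! / d ^ q) := by
        simp only [Fintype.card_fun, Fintype.card_fin]
        push_cast
        ring

theorem integral_prod_norm_apply_le (P : Measure (Matrix.unitaryGroup (Fin d) ℂ))
    [IsProbabilityMeasure P] [P.IsMulLeftInvariant] {ι : Type*} [Fintype ι] {q : ℕ}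
    (hι : Fintype.card ι = 2 * q) (J K : ι → Fin d) :
    ∫ Ψ, ∏ s, ‖Ψ.1 (J s) (K s)‖ ∂P ≤ q ! / d ^ q := by
  rcases isEmpty_or_nonempty ι with hempty | hnonempty
  · obtain rfl : q = 0 := by simp at hι; omega
    simp
  have hint (s : ι) := integrable_norm_apply_pow P (J s) (K s) (2 * q)
  calc ∫ Ψ, ∏ s, ‖Ψ.1 (J s) (K s)‖ ∂P
      ≤ ∫ Ψ, (∑ s, ‖Ψ.1 (J s) (K s)‖ ^ (2 * q)) / (2 * q : ℕ) ∂P := by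
        refine integral_mono_of_nonneg (ae_of_all _ fun Ψ => by positivity)
          ((integrable_finsetSum _ fun s _ => hint s).div_const _) (ae_of_all _ fun Ψ => ?_)
        simpa only [hι] using
          Real.prod_le_sum_pow_card_div_card fun s => norm_nonneg (Ψ.1 (J s) (K s))
    _ = (∑ s, ∫ Ψ, ‖Ψ.1 (J s) (K s)‖ ^ (2 * q) ∂P) / (2 * q : ℕ) := by
        rw [integral_div, integral_finsetSum _ fun s _ => hint s]
    _ ≤ (∑ _s : ι, (q ! / d ^ q : ℝ)) / (2 * q : ℕ) := by
        gcongr with s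
        exact integral_norm_apply_pow_le P q (J s) (K s)
    _ = q ! / d ^ q := by
        have hq : ((2 * q : ℕ) : ℝ) ≠ 0 := by
          rw [← hι]
          positivity
        rw [sum_const, card_univ, hι, nsmul_eq_mul, mul_div_cancel_left₀ _ hq]

end UnitaryGroup

theorem stmt10_general (q : ℕ) :
    ∃ C > (0 : ℝ), ∀ d : ℕ, q ≤ d →
      ∀ [MeasurableSpace (Matrix.unitaryGroup (Fin d) ℂ)]
        [BorelSpace (Matrix.unitaryGroup (Fin d) ℂ)]
        (P : Measure (Matrix.unitaryGroup (Fin d) ℂ)) [IsProbabilityMeasure P],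
        (∀ g : Matrix.unitaryGroup (Fin d) ℂ, P.map (fun x => g * x) = P) →
        ∀ js ks js' ks' : Fin q → Fin d,
          ‖∫ Ψ, (∏ i, Ψ.1 (js i) (ks i)) *
            ∏ i, (starRingEnd ℂ) (Ψ.1 (js' i) (ks' i)) ∂P‖ ≤ C / (d : ℝ) ^ q := by
  refine ⟨q !, by positivity, fun d _ _ _ P _ hP js ks js' ks' => ?_⟩
  have : P.IsMulLeftInvariant := ⟨hP⟩
  calc _ ≤ ∫ Ψ, ‖(∏ i, Ψ.1 (js i) (ks i)) * ∏ i, conj (Ψ.1 (js' i) (ks' i))‖ ∂P :=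
        norm_integral_le_integral_norm _
    _ = ∫ Ψ, ∏ s, ‖Ψ.1 (Sum.elim js js' s) (Sum.elim ks ks' s)‖ ∂P := by
        simp only [Fintype.prod_sum_type, norm_mul, norm_prod, Complex.norm_conj, Sum.elim_inl,
          Sum.elim_inr]
    _ ≤ q ! / d ^ q := integral_prod_norm_apply_le P (by simp [two_mul]) _ _

/-- Uniform Weingarten bound: for every `q ≥ 1` there is `C_q` such that in the stable range
`d ≥ q`, any `2q`-th mixed moment of entries of a Haar unitary `d × d` matrix is at most
`C_q d^{-q}` in absolute value. -/
theorem stmt10 (q : ℕ) (hq : 1 ≤ q) :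
    ∃ C > (0 : ℝ), ∀ d : ℕ, q ≤ d →
      ∀ [MeasurableSpace (Matrix.unitaryGroup (Fin d) ℂ)]
        [BorelSpace (Matrix.unitaryGroup (Fin d) ℂ)]
        (P : Measure (Matrix.unitaryGroup (Fin d) ℂ)) [IsProbabilityMeasure P],
        (∀ g : Matrix.unitaryGroup (Fin d) ℂ, P.map (fun x => g * x) = P) →
        ∀ js ks js' ks' : Fin q → Fin d,
          ‖∫ Ψ, (∏ i, Ψ.1 (js i) (ks i)) *
            ∏ i, (starRingEnd ℂ) (Ψ.1 (js' i) (ks' i)) ∂P‖ ≤ C / (d : ℝ) ^ q :=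
  stmt10_general q
end

section
/- There is an absolute constant C such that the following holds. Let N ≥ 2 be an integer, M ≥ 1 a real number, and λ = (λ_{−N},…,λ_N) ∈ ℝ^{2N+1}. Assume that (i) every interval I ⊂ ℝ of length 4/N contains at most M of the numbers λ_k, and (ii) the number of indices k with |λ_k| ≥ 8 is at most M. Then for every T with 1 ≤ T ≤ N and every α ∈ ℝ: ∑_{k=−N}^{N} 1/(1/T + |λ_k − α|) ≤ C · M · N · (log N + log(16 + |α|)). -/
set_option maxHeartbeats 1600000 in
/-- Deterministic core of the eigenvalue resolvent-sum bound: if every interval of length `4/N`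
contains at most `M` of the `λ_k` and at most `M` of them satisfy `|λ_k| ≥ 8`, then for
`1 ≤ T ≤ N` one has `∑_k (1/T + |λ_k − α|)⁻¹ ≤ C M N (log N + log(16 + |α|))`. -/
theorem stmt14 :
    ∃ C > (0 : ℝ), ∀ N : ℕ, 2 ≤ N → ∀ M : ℝ, 1 ≤ M →
      ∀ lam : Fin (2 * N + 1) → ℝ,
        (∀ a b : ℝ, b - a ≤ 4 / (N : ℝ) →
          ((Finset.univ.filter fun k => lam k ∈ Set.Icc a b).card : ℝ) ≤ M) →
        (((Finset.univ.filter fun k : Fin (2 * N + 1) => 8 ≤ |lam k|).card : ℝ) ≤ M) →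
        ∀ T : ℝ, 1 ≤ T → T ≤ N → ∀ α : ℝ,
          ∑ k, (1 / T + |lam k - α|)⁻¹ ≤
            C * M * N * (Real.log N + Real.log (16 + |α|)) := by
  refine ⟨10, by norm_num, ?_⟩
  intro N hN M hM lam hI h8 T hT1 hTN α
  have hN0 : (0 : ℝ) < N := by positivity
  have hN2 : (2 : ℝ) ≤ N := by exact_mod_cast hN
  have hα0 : (0 : ℝ) ≤ |α| := abs_nonneg α
  set L : ℝ := Real.log N + Real.log (16 + |α|) with hLdef
  have hlog2 : (0.6931471803 : ℝ) < Real.log 2 := Real.log_two_gt_d9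
  have hL3 : 3 ≤ L := by
    have h1 : Real.log 2 ≤ Real.log N := Real.log_le_log (by norm_num) hN2
    have h2 : Real.log 16 ≤ Real.log (16 + |α|) := Real.log_le_log (by norm_num) (by linarith)
    have h16 : Real.log 16 = 4 * Real.log 2 := by
      rw [show (16 : ℝ) = 2 ^ 4 by norm_num, Real.log_pow]; push_cast; ring
    simp only [hLdef]; nlinarith
  -- each term is at most N
  have hfN : ∀ k, (1 / T + |lam k - α|)⁻¹ ≤ (N : ℝ) := by
    intro k
    have hT0 : (0 : ℝ) < T := by linarith
    have h1 : (0 : ℝ) < 1 / T := by positivity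
    have h2 : (1 / T + |lam k - α|)⁻¹ ≤ (1 / T)⁻¹ := by
      apply inv_anti₀ h1
      linarith [abs_nonneg (lam k - α)]
    have h3 : (1 / T)⁻¹ = T := by rw [one_div, inv_inv]
    rw [h3] at h2; linarith
  -- split off the indices with |lam k| ≥ 8
  classical
  rw [← Finset.sum_filter_add_sum_filter_not Finset.univ (fun k => 8 ≤ |lam k|)]
  set S1 := Finset.univ.filter (fun k : Fin (2 * N + 1) => 8 ≤ |lam k|) with hS1
  set S2 := Finset.univ.filter (fun k : Fin (2 * N + 1) => ¬ 8 ≤ |lam k|) with hS2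
  have hsum1 : ∑ k ∈ S1, (1 / T + |lam k - α|)⁻¹ ≤ M * N := by
    calc ∑ k ∈ S1, (1 / T + |lam k - α|)⁻¹ ≤ S1.card • (N : ℝ) :=
          Finset.sum_le_card_nsmul _ _ _ (fun k _ => hfN k)
      _ = (S1.card : ℝ) * N := by rw [nsmul_eq_mul]
      _ ≤ M * N := by apply mul_le_mul_of_nonneg_right h8 (le_of_lt hN0)
  -- bucket the remaining indices
  set c : ℕ := ⌈|α|⌉₊ with hc
  set J : ℕ := N * (16 + c) with hJ
  have hcle : (c : ℝ) ≤ |α| + 1 := le_of_lt (Nat.ceil_lt_add_one hα0)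
  have hcge : |α| ≤ (c : ℝ) := Nat.le_ceil _
  have hJ0 : 0 < J := by
    have : 0 < N := by omega
    positivity
  have hJR : (J : ℝ) = (N : ℝ) * (16 + c) := by push_cast [hJ]; ring
  set g : Fin (2 * N + 1) → ℕ := fun k => ⌊|lam k - α| * N / 4⌋₊ with hg
  have hmaps : ∀ k ∈ S2, g k ∈ Finset.range (J + 1) := by
    intro k hk
    rw [hS2, Finset.mem_filter] at hk
    have h8k : |lam k| < 8 := by linarith [not_le.mp hk.2]
    have hd : |lam k - α| ≤ 8 + |α| := by
      calc |lam k - α| ≤ |lam k| + |α| := abs_sub _ _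
        _ ≤ 8 + |α| := by linarith
    rw [Finset.mem_range, Nat.lt_succ_iff]
    have hle : |lam k - α| * N / 4 ≤ (J : ℝ) := by
      rw [hJR]
      have h1 : |lam k - α| * N / 4 ≤ (8 + |α|) * N / 4 := by
        apply div_le_div_of_nonneg_right _ (by norm_num)
        exact mul_le_mul_of_nonneg_right hd (le_of_lt hN0)
      nlinarith
    calc g k ≤ ⌊(J : ℝ)⌋₊ := Nat.floor_le_floor hle
      _ = J := Nat.floor_natCast J
  -- fiberwise sum
  have hfib := Finset.sum_fiberwise_of_maps_to hmaps (fun k => (1 / T + |lam k - α|)⁻¹)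
  rw [← hfib]
  -- the bucket-wise bound function
  set h : ℕ → ℝ := fun j => if j = 0 then (N : ℝ) else (N : ℝ) / (4 * j) with hh
  have hval0 : h 0 = (N : ℝ) := by simp [hh]
  have hvalS : ∀ j : ℕ, j ≠ 0 → h j = (N : ℝ) / (4 * j) := by
    intro j hj; simp [hh, hj]
  have hh0 : ∀ j, 0 ≤ h j := by
    intro j
    rcases eq_or_ne j 0 with rfl | hj
    · rw [hval0]; positivity
    · rw [hvalS j hj]; positivity
  have hfiber : ∀ j ∈ Finset.range (J + 1),
      ∑ k ∈ S2.filter (fun k => g k = j), (1 / T + |lam k - α|)⁻¹ ≤ 2 * M * h j := by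
    intro j _
    set F := S2.filter (fun k => g k = j) with hF
    -- term bound on the fiber
    have hterm : ∀ k ∈ F, (1 / T + |lam k - α|)⁻¹ ≤ h j := by
      intro k hk
      rw [hF, Finset.mem_filter] at hk
      have hk2 : ⌊|lam k - α| * (N : ℝ) / 4⌋₊ = j := hk.2
      rcases eq_or_ne j 0 with rfl | hj0'
      · rw [hval0]; exact hfN k
      · rw [hvalS j hj0']
        have hge : (j : ℝ) ≤ |lam k - α| * N / 4 := by
          rw [← hk2]
          exact Nat.floor_le (by positivity)
        have hjpos : (0 : ℝ) < j := by
          have : 0 < j := Nat.pos_of_ne_zero hj0'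
          exact_mod_cast this
        have hlow : 4 * (j : ℝ) / N ≤ |lam k - α| := by
          rw [div_le_iff₀ hN0]; nlinarith
        have hpos : (0 : ℝ) < 4 * (j : ℝ) / N := by positivity
        have hT0 : (0 : ℝ) < T := by linarith
        have key : (1 / T + |lam k - α|)⁻¹ ≤ (4 * (j : ℝ) / N)⁻¹ := by
          apply inv_anti₀ hpos
          have : (0 : ℝ) < 1 / T := by positivity
          linarith
        have heq : (4 * (j : ℝ) / N)⁻¹ = (N : ℝ) / (4 * j) := inv_div _ _
        rw [heq] at key; exact key
    -- cardinality bound on the fiber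
    have hcard : (F.card : ℝ) ≤ 2 * M := by
      set A := Finset.univ.filter
        (fun k : Fin (2 * N + 1) => lam k ∈ Set.Icc (α + 4 * j / N) (α + 4 * (j + 1) / N)) with hA
      set B := Finset.univ.filter
        (fun k : Fin (2 * N + 1) => lam k ∈ Set.Icc (α - 4 * (j + 1) / N) (α - 4 * j / N)) with hB
      have hsub : F ⊆ A ∪ B := by
        intro k hk
        rw [hF, Finset.mem_filter] at hk
        have hk2 : ⌊|lam k - α| * (N : ℝ) / 4⌋₊ = j := hk.2
        have hge : (j : ℝ) ≤ |lam k - α| * N / 4 := by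
          rw [← hk2]
          exact Nat.floor_le (by positivity)
        have hlt : |lam k - α| * N / 4 < (j : ℝ) + 1 := by
          rw [← hk2]
          exact Nat.lt_floor_add_one _
        have hlow : 4 * (j : ℝ) / N ≤ |lam k - α| := by rw [div_le_iff₀ hN0]; nlinarith
        have hup : |lam k - α| ≤ 4 * ((j : ℝ) + 1) / N := by rw [le_div_iff₀ hN0]; nlinarith
        rw [Finset.mem_union]
        rcases le_or_gt 0 (lam k - α) with hsgn | hsgn
        · left
          rw [hA, Finset.mem_filter]
          refine ⟨Finset.mem_univ _, ?_⟩
          rw [Set.mem_Icc]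
          rw [abs_of_nonneg hsgn] at hlow hup
          constructor <;> linarith
        · right
          rw [hB, Finset.mem_filter]
          refine ⟨Finset.mem_univ _, ?_⟩
          rw [Set.mem_Icc]
          rw [abs_of_neg hsgn] at hlow hup
          constructor <;> linarith
      have hlen : ∀ x : ℝ, (α + 4 * (x + 1) / N) - (α + 4 * x / N) ≤ 4 / N := by
        intro x
        have : (α + 4 * (x + 1) / N) - (α + 4 * x / N) = 4 / N := by
          field_simp; ring
        linarith
      have hAcard : (A.card : ℝ) ≤ M := by
        rw [hA]; exact hI _ _ (hlen (j : ℝ))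
      have hBcard : (B.card : ℝ) ≤ M := by
        rw [hB]
        apply hI
        have := hlen (j : ℝ); linarith
      calc (F.card : ℝ) ≤ ((A ∪ B).card : ℝ) := by exact_mod_cast Finset.card_le_card hsub
        _ ≤ (A.card : ℝ) + B.card := by exact_mod_cast Finset.card_union_le A B
        _ ≤ 2 * M := by linarith
    calc ∑ k ∈ F, (1 / T + |lam k - α|)⁻¹ ≤ F.card • h j :=
          Finset.sum_le_card_nsmul _ _ _ hterm
      _ = (F.card : ℝ) * h j := by rw [nsmul_eq_mul]
      _ ≤ 2 * M * h j := mul_le_mul_of_nonneg_right hcard (hh0 j)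
  have hsum2 : ∑ j ∈ Finset.range (J + 1),
      ∑ k ∈ S2.filter (fun k => g k = j), (1 / T + |lam k - α|)⁻¹ ≤
      2 * M * ∑ j ∈ Finset.range (J + 1), h j := by
    rw [Finset.mul_sum]
    exact Finset.sum_le_sum hfiber
  -- evaluate the sum of h
  have hN4 : (0 : ℝ) ≤ (N : ℝ) / 4 := by positivity
  have hhsum : ∑ j ∈ Finset.range (J + 1), h j ≤ (N : ℝ) + (N : ℝ) / 4 * (1 + Real.log J) := by
    rw [Finset.sum_range_succ']
    have hstep : ∀ i : ℕ, h (i + 1) = (N : ℝ) / 4 * ((i : ℝ) + 1)⁻¹ := by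
      intro i
      rw [hvalS (i + 1) (Nat.succ_ne_zero i)]
      have hi0 : ((i : ℝ) + 1) ≠ 0 := by positivity
      push_cast
      field_simp
    have hsum : ∑ i ∈ Finset.range J, h (i + 1)
        = (N : ℝ) / 4 * ∑ i ∈ Finset.range J, ((i : ℝ) + 1)⁻¹ := by
      rw [Finset.mul_sum]; exact Finset.sum_congr rfl (fun i _ => hstep i)
    rw [hsum, hval0]
    have hharm : ∑ i ∈ Finset.range J, ((i : ℝ) + 1)⁻¹ ≤ 1 + Real.log J := by
      have h1 := harmonic_le_one_add_log J
      have hcast : ((harmonic J : ℚ) : ℝ) = ∑ i ∈ Finset.range J, ((i : ℝ) + 1)⁻¹ := by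
        rw [harmonic]; push_cast; ring
      rw [hcast] at h1; exact h1
    have := mul_le_mul_of_nonneg_left hharm hN4
    linarith
  -- bound log J
  have hlogJ : Real.log J ≤ 1 + L := by
    have hc16 : (0 : ℝ) < 16 + c := by positivity
    have hJlog : Real.log J = Real.log N + Real.log (16 + c) := by
      rw [hJR, Real.log_mul (ne_of_gt hN0) (ne_of_gt hc16)]
    rw [hJlog]
    have h1 : (16 : ℝ) + c ≤ 2 * (16 + |α|) := by nlinarith
    have h2 : Real.log (16 + c) ≤ Real.log (2 * (16 + |α|)) := Real.log_le_log hc16 h1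
    have h3 : Real.log (2 * (16 + |α|)) = Real.log 2 + Real.log (16 + |α|) := by
      rw [Real.log_mul (by norm_num) (by positivity)]
    rw [h3] at h2
    have hlog2' : Real.log 2 < 1 := by
      have := Real.log_two_lt_d9; linarith
    rw [hLdef]; linarith
  -- put everything together
  have hMN : (0 : ℝ) < M * N := by nlinarith
  have hfinal : ∑ j ∈ Finset.range (J + 1),
      ∑ k ∈ S2.filter (fun k => g k = j), (1 / T + |lam k - α|)⁻¹ ≤
      2 * M * ((N : ℝ) + (N : ℝ) / 4 * (2 + L)) := by
    refine hsum2.trans ?_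
    have hM0 : (0 : ℝ) ≤ 2 * M := by linarith
    apply mul_le_mul_of_nonneg_left _ hM0
    have h1 : (1 : ℝ) + Real.log J ≤ 2 + L := by linarith
    have := mul_le_mul_of_nonneg_left h1 hN4
    linarith
  calc ∑ k ∈ S1, (1 / T + |lam k - α|)⁻¹ +
        ∑ j ∈ Finset.range (J + 1), ∑ k ∈ S2.filter (fun k => g k = j), (1 / T + |lam k - α|)⁻¹
      ≤ M * N + 2 * M * ((N : ℝ) + (N : ℝ) / 4 * (2 + L)) := by linarith
    _ ≤ 10 * M * N * L := by nlinarith [mul_le_mul_of_nonneg_left hL3 hMN.le]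
end
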